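/- arXiv:2510.02217 — 5 statements merged into one kernel-verified Lean document; each statement's English description precedes it below -/
import Mathlib

section
/- If 𝒟 is an upper semicontinuous decomposition of a compact metric space X, then the monotonization Mon(𝒟), whose elements are the connected components of elements of 𝒟, is an upper semicontinuous decomposition of X. -/
open Set Filter Metric Topology

private lemma mem_limsupSet {X : Type*} [TopologicalSpace X] (K : ℕ → Set X) (y : ℕ → X)
    (hy : ∀ n, y n ∈ K n) (p : X) (hp : Filter.Tendsto y Filter.atTop (nhds p)) :
    p ∈ ⋂ N : ℕ, closure (⋃ n ∈ Set.Ici N, K n) := by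
  refine Set.mem_iInter.2 fun N => mem_closure_of_frequently_of_tendsto ?_ hp
  exact ((Filter.eventually_ge_atTop N).mono fun n hn => Set.mem_biUnion hn (hy n)).frequently

/-- Auxiliary contradiction step for the connectedness of the upper (Kuratowski) limit. -/
private lemma limsup_aux_false {X : Type*} [MetricSpace X] [CompactSpace X]
    (K : ℕ → Set X) (hK : ∀ n, IsPreconnected (K n))
    (y : ℕ → X) (hy : ∀ n, y n ∈ K n) (p : X)
    (hp : Filter.Tendsto y Filter.atTop (nhds p))
    (A B : Set X) (hAc : IsCompact A) (hBc : IsCompact B) (hBne : B.Nonempty)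
    (hAB : Disjoint A B) (hpA : p ∈ A)
    (hB : ∀ N : ℕ, B ⊆ closure (⋃ n ∈ Set.Ici N, K n))
    (hcover : ∀ z : X, (∀ N : ℕ, z ∈ closure (⋃ n ∈ Set.Ici N, K n)) → z ∈ A ∪ B) :
    False := by
  obtain ⟨δ, hδ, hdisj⟩ := hAB.exists_thickenings hAc hBc.isClosed
  set U' := Metric.thickening (δ / 2) A with hU'def
  set V' := Metric.thickening (δ / 2) B with hV'def
  have hhalf : (0 : ℝ) < δ / 2 := by linarith
  have hU'V' : Disjoint U' V' :=
    hdisj.mono (Metric.thickening_mono (by linarith) A) (Metric.thickening_mono (by linarith) B)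
  have hAU' : A ⊆ U' := Metric.self_subset_thickening hhalf A
  have hBV' : B ⊆ V' := Metric.self_subset_thickening hhalf B
  have hev : ∀ᶠ n in Filter.atTop, K n ⊆ U' ∪ V' := by
    by_contra hc
    rw [Filter.not_eventually] at hc
    set E : ℕ → Set X := fun N => closure (⋃ n ∈ Set.Ici N, K n) ∩ (U' ∪ V')ᶜ with hE
    have hEcl : ∀ N, IsClosed (E N) := fun N =>
      isClosed_closure.inter
        (Metric.isOpen_thickening.union Metric.isOpen_thickening).isClosed_compl
    have hEne : ∀ N, (E N).Nonempty := by
      intro N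
      obtain ⟨n, hns, hn⟩ := ((Filter.eventually_ge_atTop N).and_frequently hc).exists
      obtain ⟨z, hzK, hz⟩ := Set.not_subset.1 hn
      exact ⟨z, subset_closure (Set.mem_biUnion hns hzK), hz⟩
    have hEdec : ∀ N, E (N + 1) ⊆ E N := fun N =>
      Set.inter_subset_inter_left _ (closure_mono
        (Set.biUnion_subset_biUnion_left fun n hn => (Nat.le_succ N).trans hn))
    obtain ⟨z, hz⟩ := IsCompact.nonempty_iInter_of_sequence_nonempty_isCompact_isClosed
      E hEdec hEne (hEcl 0).isCompact hEcl
    rw [Set.mem_iInter] at hz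
    rcases hcover z (fun N => (hz N).1) with h | h
    · exact (hz 0).2 (Or.inl (hAU' h))
    · exact (hz 0).2 (Or.inr (hBV' h))
  have hevy : ∀ᶠ n in Filter.atTop, y n ∈ U' :=
    hp (Metric.isOpen_thickening.mem_nhds (hAU' hpA))
  obtain ⟨N, hN⟩ := Filter.eventually_atTop.1 (hev.and hevy)
  have hKU' : ∀ n, N ≤ n → K n ⊆ U' := by
    intro n hn z hz
    obtain ⟨hsub, hyU⟩ := hN n hn
    rcases hsub hz with h | h
    · exact h
    · exfalso
      obtain ⟨w, _, hwU, hwV⟩ := hK n U' V' Metric.isOpen_thickening Metric.isOpen_thickening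
        hsub ⟨y n, hy n, hyU⟩ ⟨z, hz, h⟩
      exact Set.disjoint_left.1 hU'V' hwU hwV
  obtain ⟨b, hb⟩ := hBne
  have hbU : b ∈ Metric.thickening δ A := by
    have h1 : b ∈ closure U' :=
      closure_mono (Set.iUnion₂_subset fun n hn => hKU' n hn) (hB N hb)
    exact ((closure_minimal (Metric.thickening_subset_cthickening _ _)
      Metric.isClosed_cthickening).trans
      (Metric.cthickening_subset_thickening' hδ (by linarith) A)) h1
  exact Set.disjoint_left.1 hdisj hbU (Metric.self_subset_thickening hδ B hb)

/-- Kuratowski: the upper limit of a sequence of preconnected sets, all of which meet a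
convergent sequence, is preconnected (in a compact metric space). -/
private lemma limsupSet_preconnected {X : Type*} [MetricSpace X] [CompactSpace X]
    (K : ℕ → Set X) (hK : ∀ n, IsPreconnected (K n))
    (y : ℕ → X) (hy : ∀ n, y n ∈ K n) (p : X)
    (hp : Filter.Tendsto y Filter.atTop (nhds p)) :
    IsPreconnected (⋂ N : ℕ, closure (⋃ n ∈ Set.Ici N, K n)) := by
  set L := ⋂ N : ℕ, closure (⋃ n ∈ Set.Ici N, K n) with hLdef
  have hLclosed : IsClosed L := isClosed_iInter fun _ => isClosed_closure
  intro U V hU hV hUV hUne hVne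
  by_contra hcon
  rw [Set.not_nonempty_iff_eq_empty] at hcon
  set A := L \ V with hAdef
  set B := L \ U with hBdef
  have hmemL : ∀ z : X, z ∈ L ↔ ∀ N : ℕ, z ∈ closure (⋃ n ∈ Set.Ici N, K n) := fun z =>
    Set.mem_iInter
  have hLAB : ∀ z, z ∈ L → z ∈ A ∪ B := by
    intro z hz
    rcases hUV hz with h | h
    · exact Or.inl ⟨hz, fun hv => Set.eq_empty_iff_forall_notMem.1 hcon z ⟨hz, h, hv⟩⟩
    · exact Or.inr ⟨hz, fun hu => Set.eq_empty_iff_forall_notMem.1 hcon z ⟨hz, hu, h⟩⟩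
  have hAc : IsCompact A := (hLclosed.sdiff hV).isCompact
  have hBc : IsCompact B := (hLclosed.sdiff hU).isCompact
  have hAB : Disjoint A B := by
    rw [Set.disjoint_left]
    rintro z ⟨hzL, hzV⟩ ⟨_, hzU⟩
    rcases hUV hzL with h | h
    exacts [hzU h, hzV h]
  have hAne : A.Nonempty := by
    obtain ⟨a, haL, haU⟩ := hUne
    exact ⟨a, haL, fun hv => Set.eq_empty_iff_forall_notMem.1 hcon a ⟨haL, haU, hv⟩⟩
  have hBne : B.Nonempty := by
    obtain ⟨b, hbL, hbV⟩ := hVne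
    exact ⟨b, hbL, fun hu => Set.eq_empty_iff_forall_notMem.1 hcon b ⟨hbL, hu, hbV⟩⟩
  have hpL : p ∈ L := mem_limsupSet K y hy p hp
  have hcover : ∀ z : X, (∀ N : ℕ, z ∈ closure (⋃ n ∈ Set.Ici N, K n)) → z ∈ A ∪ B :=
    fun z hz => hLAB z ((hmemL z).2 hz)
  have hBsub : ∀ N : ℕ, B ⊆ closure (⋃ n ∈ Set.Ici N, K n) :=
    fun N b hb => (hmemL b).1 hb.1 N
  have hAsub : ∀ N : ℕ, A ⊆ closure (⋃ n ∈ Set.Ici N, K n) :=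
    fun N a ha => (hmemL a).1 ha.1 N
  rcases hLAB p hpL with hpA | hpB
  · exact limsup_aux_false K hK y hy p hp A B hAc hBc hBne hAB hpA hBsub hcover
  · exact limsup_aux_false K hK y hy p hp B A hBc hAc hAne hAB.symm hpB hAsub
      (fun z hz => Or.symm (hcover z hz))

private lemma isClosed_connectedComponentIn_of_isClosed {X : Type*} [TopologicalSpace X]
    {F : Set X} (hF : IsClosed F) (x : X) : IsClosed (connectedComponentIn F x) := by
  by_cases hx : x ∈ F
  · rw [connectedComponentIn_eq_image hx]
    exact hF.isClosedEmbedding_subtypeVal.isClosedMap _ isClosed_connectedComponent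
  · rw [connectedComponentIn_eq_empty hx]
    exact isClosed_empty

/-- The monotonization of an upper semicontinuous decomposition of a compact metric
space is upper semicontinuous.  The decomposition is encoded as a setoid `s` with
closed classes and closed quotient map; the monotonization is any setoid `m` whose
class through `x` is the connected component of `x` inside the `s`-class of `x`.
The conclusion: the classes of `m` are closed and the quotient map of `m` is closed. -/
theorem monotonization_usc {X : Type*} [MetricSpace X] [CompactSpace X]
    (s : Setoid X)
    (hcl : ∀ x : X, IsClosed {y | s.r x y})
    (husc : IsClosedMap (Quotient.mk s))
    (m : Setoid X)
    (hm : ∀ x : X, {y | m.r x y} = connectedComponentIn {y | s.r x y} x) :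
    (∀ x : X, IsClosed {y | m.r x y}) ∧ IsClosedMap (Quotient.mk m) := by
  have hmk : Continuous (Quotient.mk s) := continuous_quotient_mk'
  have hsat : ∀ F : Set X, IsClosed F → IsClosed {w : X | ∃ z ∈ F, s.r z w} := by
    intro F hF
    have h2 : IsClosed (Quotient.mk s ⁻¹' (Quotient.mk s '' F)) := (husc F hF).preimage hmk
    convert h2 using 1
    ext w
    simp only [Set.mem_preimage, Set.mem_image, Set.mem_setOf_eq]
    constructor
    · rintro ⟨z, hz, hrel⟩; exact ⟨z, hz, Quotient.sound hrel⟩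
    · rintro ⟨z, hz, heq⟩; exact ⟨z, hz, Quotient.exact heq⟩
  constructor
  · intro x
    rw [hm x]
    exact isClosed_connectedComponentIn_of_isClosed (hcl x) x
  · have hqm : IsQuotientMap (Quotient.mk m) := isQuotientMap_quotient_mk'
    intro C hC
    rw [← hqm.isClosed_preimage]
    have hSeq : Quotient.mk m ⁻¹' (Quotient.mk m '' C) = {w : X | ∃ c ∈ C, m.r c w} := by
      ext w
      simp only [Set.mem_preimage, Set.mem_image, Set.mem_setOf_eq]
      constructor
      · rintro ⟨z, hz, heq⟩; exact ⟨z, hz, Quotient.exact heq⟩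
      · rintro ⟨z, hz, hrel⟩; exact ⟨z, hz, Quotient.sound hrel⟩
    rw [hSeq]
    refine IsSeqClosed.isClosed ?_
    intro x p hxS hxp
    choose c hcC hcm using hxS
    obtain ⟨cl, hclC, φ, hφmono, hcφ⟩ := hC.isCompact.tendsto_subseq hcC
    set y : ℕ → X := x ∘ φ with hydef
    have hyp : Filter.Tendsto y Filter.atTop (nhds p) := hxp.comp hφmono.tendsto_atTop
    set K : ℕ → Set X := fun n => {w | m.r (y n) w} with hKdef
    have hKcc : ∀ n, K n = connectedComponentIn {w | s.r (y n) w} (y n) := fun n => hm (y n)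
    have hKpre : ∀ n, IsPreconnected (K n) := fun n =>
      (hKcc n) ▸ isPreconnected_connectedComponentIn
    have hyK : ∀ n, y n ∈ K n := fun n => m.iseqv.refl (y n)
    have hcK : ∀ n, c (φ n) ∈ K n := fun n => m.iseqv.symm (hcm (φ n))
    have hKsub : ∀ n, K n ⊆ {w | s.r (y n) w} := fun n =>
      (hKcc n) ▸ connectedComponentIn_subset _ _
    set L := ⋂ N : ℕ, closure (⋃ n ∈ Set.Ici N, K n) with hLdef
    have hpL : p ∈ L := mem_limsupSet K y hyK p hyp
    have hclL : cl ∈ L := mem_limsupSet K (fun n => c (φ n)) hcK cl hcφ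
    have hLpre : IsPreconnected L := limsupSet_preconnected K hKpre y hyK p hyp
    have hLsub : L ⊆ {w | s.r p w} := by
      intro w hw
      by_contra hrel
      have hfreq : ∀ N : ℕ, ∃ n, N ≤ n ∧ s.r (y n) w := by
        intro N
        set F : Set X := insert p (Set.range fun k => y (k + N)) with hFdef
        have hFc : IsCompact F := (hyp.comp (tendsto_add_atTop_nat N)).isCompact_insert_range
        have hsatF : IsClosed {v : X | ∃ z ∈ F, s.r z v} := hsat F hFc.isClosed
        have hwF : w ∈ {v : X | ∃ z ∈ F, s.r z v} := by
          have h1 : closure (⋃ n ∈ Set.Ici N, K n) ⊆ {v | ∃ z ∈ F, s.r z v} := by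
            refine closure_minimal (Set.iUnion₂_subset fun n hn v hv => ?_) hsatF
            exact ⟨y n, Set.mem_insert_iff.2 (Or.inr ⟨n - N, by
              simp [Nat.sub_add_cancel hn]⟩), hKsub n hv⟩
          exact h1 (Set.mem_iInter.1 hw N)
        obtain ⟨z, hzF, hzw⟩ := hwF
        rcases Set.mem_insert_iff.1 hzF with h | ⟨k, hk⟩
        · exact absurd (h ▸ hzw) hrel
        · exact ⟨k + N, Nat.le_add_left N k,
            by rw [show y (k + N) = z from hk]; exact hzw⟩
      have hpmem : p ∈ {v | s.r w v} := by
        have hfr : ∃ᶠ n in Filter.atTop, y n ∈ {v | s.r w v} := by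
          rw [Filter.frequently_atTop]
          intro N
          obtain ⟨n, hn, h⟩ := hfreq N
          exact ⟨n, hn, s.iseqv.symm h⟩
        have h2 := mem_closure_of_frequently_of_tendsto hfr hyp
        rwa [(hcl w).closure_eq] at h2
      exact hrel (s.iseqv.symm hpmem)
    have hLcc : L ⊆ connectedComponentIn {w | s.r p w} p :=
      hLpre.subset_connectedComponentIn hpL hLsub
    have hrelpcl : m.r p cl := by
      have h3 := hLcc hclL
      rw [← hm p] at h3
      exact h3
    exact ⟨cl, hclC, m.iseqv.symm hrelpcl⟩
end

section
/- Let S¹ be the unit circle in ℝ² and let A, B ⊆ S¹ be disjoint subsets. Then the convex hulls conv(A) and conv(B) intersect if and only if A and B are linked in S¹, i.e., there exist points a, a' ∈ A and b, b' ∈ B such that the pair {a,a'} separates b from b' in the circle. -/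
open Metric Real

noncomputable section

abbrev E2 := EuclideanSpace ℝ (Fin 2)

/-- The unit circle in `ℝ²`. -/
def circ : Set E2 := sphere 0 1

/-- The pair `{a, a'}` separates `b` from `b'` in the circle: `b` and `b'` lie in the
circle minus `{a, a'}`, in distinct connected components. -/
def SeparatesPair (a a' b b' : E2) : Prop :=
  b ∈ circ \ {a, a'} ∧ b' ∈ circ \ {a, a'} ∧
    b' ∉ connectedComponentIn (circ \ {a, a'}) b

/-- Two subsets of the circle are linked if they contain linked pairs. -/
def Linked (A B : Set E2) : Prop :=
  ∃ a ∈ A, ∃ a' ∈ A, ∃ b ∈ B, ∃ b' ∈ B, SeparatesPair a a' b b'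

namespace HullsAux

def pt (x y : ℝ) : E2 := (WithLp.equiv 2 (Fin 2 → ℝ)).symm ![x, y]

@[simp] lemma pt_zero (x y : ℝ) : pt x y 0 = x := rfl
@[simp] lemma pt_one (x y : ℝ) : pt x y 1 = y := rfl

lemma norm_sq_eq (z : E2) : ‖z‖ ^ 2 = z 0 ^ 2 + z 1 ^ 2 := by
  rw [EuclideanSpace.norm_eq]
  rw [Real.sq_sqrt (by positivity)]
  simp [Fin.sum_univ_two, sq_abs]

lemma mem_circ_iff {z : E2} : z ∈ circ ↔ z 0 ^ 2 + z 1 ^ 2 = 1 := by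
  rw [circ, mem_sphere_iff_norm, sub_zero, ← norm_sq_eq]
  constructor
  · intro h; rw [h]; norm_num
  · intro h
    nlinarith [norm_nonneg z]

lemma pt_mem_circ {x y : ℝ} (h : x ^ 2 + y ^ 2 = 1) : pt x y ∈ circ := by
  rw [mem_circ_iff]; simpa using h

def cp (θ : ℝ) : E2 := pt (Real.cos θ) (Real.sin θ)

@[simp] lemma cp_zero (θ : ℝ) : cp θ 0 = Real.cos θ := rfl
@[simp] lemma cp_one (θ : ℝ) : cp θ 1 = Real.sin θ := rfl

lemma cp_mem_circ (θ : ℝ) : cp θ ∈ circ :=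
  pt_mem_circ (by rw [add_comm]; exact Real.sin_sq_add_cos_sq θ)

lemma ext2 {z w : E2} (h0 : z 0 = w 0) (h1 : z 1 = w 1) : z = w := by
  ext i; fin_cases i <;> assumption

lemma continuous_cp : Continuous cp := by
  have h1 : Continuous fun θ : ℝ => ![Real.cos θ, Real.sin θ] := by
    apply continuous_pi
    intro i; fin_cases i <;> simp [Real.continuous_cos, Real.continuous_sin]
  exact (PiLp.continuous_toLp 2 (fun _ : Fin 2 => ℝ)).comp h1

/-- The signed cross product functional. -/
def cross (a a' z : E2) : ℝ := (a' 0 - a 0) * (z 1 - a 1) - (a' 1 - a 1) * (z 0 - a 0)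

@[simp] lemma cross_self (a z : E2) : cross a a z = 0 := by simp [cross]

lemma continuous_cross (a a' : E2) : Continuous (cross a a') := by
  have h0 : Continuous fun z : E2 => z 0 := (EuclideanSpace.proj (0 : Fin 2)).continuous
  have h1 : Continuous fun z : E2 => z 1 := (EuclideanSpace.proj (1 : Fin 2)).continuous
  unfold cross; fun_prop

lemma cross_affine (a a' b b' : E2) (t : ℝ) :
    cross a a' ((1 - t) • b + t • b') = (1 - t) * cross a a' b + t * cross a a' b' := by
  simp only [cross, PiLp.add_apply, PiLp.smul_apply, smul_eq_mul]
  ring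

lemma cross_cp (u v w : ℝ) :
    cross (cp (2*u)) (cp (2*v)) (cp (2*w)) =
      4 * (Real.sin v * Real.cos u - Real.cos v * Real.sin u)
        * (Real.sin w * Real.cos u - Real.cos w * Real.sin u)
        * (Real.sin w * Real.cos v - Real.cos w * Real.sin v) := by
  simp only [cross, cp_zero, cp_one, Real.cos_two_mul', Real.sin_two_mul]
  linear_combination
    (2 * Real.sin w * Real.cos w + (-4) * Real.cos v^2 * Real.sin w * Real.cos w + (-2) * Real.sin v * Real.cos v + 4 * Real.sin v * Real.cos v * Real.cos w^2) * Real.sin_sq_add_cos_sq u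
    + ((-2) * Real.sin w * Real.cos w + 4 * Real.cos u^2 * Real.sin w * Real.cos w + 2 * Real.sin u * Real.cos u + (-4) * Real.sin u * Real.cos u * Real.cos w^2) * Real.sin_sq_add_cos_sq v
    + (2 * Real.sin v * Real.cos v + (-4) * Real.cos u^2 * Real.sin v * Real.cos v + (-2) * Real.sin u * Real.cos u + 4 * Real.sin u * Real.cos u * Real.cos v^2) * Real.sin_sq_add_cos_sq w

lemma cross_cp' (α α' β : ℝ) :
    cross (cp α) (cp α') (cp β) =
      4 * Real.sin ((α' - α)/2) * Real.sin ((β - α)/2) * Real.sin ((β - α')/2) := by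
  have := cross_cp (α/2) (α'/2) (β/2)
  rw [show 2*(α/2) = α by ring, show 2*(α'/2) = α' by ring, show 2*(β/2) = β by ring] at this
  rw [this, show (α'-α)/2 = α'/2 - α/2 by ring, show (β-α)/2 = β/2 - α/2 by ring,
    show (β-α')/2 = β/2 - α'/2 by ring, Real.sin_sub, Real.sin_sub, Real.sin_sub]

/-- An angle for a point of the circle. -/
def ang (z : E2) : ℝ := Complex.arg ⟨z 0, z 1⟩

lemma cp_ang {z : E2} (hz : z ∈ circ) : cp (ang z) = z := by
  set w : ℂ := ⟨z 0, z 1⟩ with hw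
  have habs : ‖w‖ = 1 := by
    have h2 : ‖w‖ ^ 2 = 1 := by
      rw [Complex.sq_norm, Complex.normSq_mk]
      rw [mem_circ_iff] at hz; nlinarith
    nlinarith [norm_nonneg w]
  have hw0 : w ≠ 0 := by
    intro h; rw [h] at habs; simp at habs
  refine ext2 ?_ ?_
  · rw [cp_zero, ang, Complex.cos_arg hw0, habs]; simp [hw]
  · rw [cp_one, ang, Complex.sin_arg, habs]; simp [hw]

lemma exists_angle {z : E2} (hz : z ∈ circ) : ∃ θ, cp θ = z := ⟨ang z, cp_ang hz⟩

lemma cp_add_int_mul (θ : ℝ) (k : ℤ) : cp (θ + k * (2*π)) = cp θ :=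
  ext2 (by simpa using Real.cos_add_int_mul_two_pi θ k)
    (by simpa using Real.sin_add_int_mul_two_pi θ k)

lemma cp_eq_cp_iff {θ ψ : ℝ} : cp θ = cp ψ ↔ ∃ k : ℤ, ψ = θ + k * (2*π) := by
  constructor
  · intro h
    have hc : Real.cos θ = Real.cos ψ := congrArg (fun z => z 0) h
    have hs : Real.sin θ = Real.sin ψ := congrArg (fun z => z 1) h
    have : Complex.exp (θ * Complex.I) = Complex.exp (ψ * Complex.I) := by
      rw [Complex.exp_mul_I, Complex.exp_mul_I]
      rw [← Complex.ofReal_cos, ← Complex.ofReal_cos, ← Complex.ofReal_sin, ← Complex.ofReal_sin,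
        hc, hs]
    rw [Complex.exp_eq_exp_iff_exists_int] at this
    obtain ⟨n, hn⟩ := this
    refine ⟨-n, ?_⟩
    have := congrArg Complex.im hn
    simp at this
    push_cast
    linarith
  · rintro ⟨k, rfl⟩; exact (cp_add_int_mul θ k).symm

lemma two_pi_pos : (0:ℝ) < 2*π := by positivity

/-- Injectivity of `cp` on a window of length `2π`. -/
lemma cp_inj_window {l θ ψ : ℝ} (hθ : θ ∈ Set.Ioc l (l + 2*π)) (hψ : ψ ∈ Set.Ioc l (l + 2*π))
    (h : cp θ = cp ψ) : θ = ψ := by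
  obtain ⟨k, hk⟩ := cp_eq_cp_iff.mp h
  obtain ⟨hθ1, hθ2⟩ := hθ; obtain ⟨hψ1, hψ2⟩ := hψ
  have hk0 : k = 0 := by
    rcases lt_trichotomy k 0 with h | h | h
    · have hk1 : k ≤ -1 := by omega
      have : (k : ℝ) ≤ -1 := by
        have h2 : ((k:ℤ):ℝ) ≤ ((-1:ℤ):ℝ) := by exact_mod_cast hk1
        push_cast at h2; linarith
      nlinarith [Real.pi_pos]
    · exact h
    · have : (1 : ℝ) ≤ (k : ℝ) := by exact_mod_cast h
      nlinarith [Real.pi_pos]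
  rw [hk0] at hk; push_cast at hk; linarith

lemma cp_ne_window {l θ : ℝ} (hθ : θ ∈ Set.Ioo l (l + 2*π)) : cp θ ≠ cp l := by
  intro h
  have := cp_inj_window (Set.Ioo_subset_Ioc_self hθ) ⟨by linarith [two_pi_pos, hθ.1], le_refl _⟩
    (by rw [h, ← cp_add_int_mul l 1]; norm_num)
  exact absurd this (by intro hh; rw [hh] at hθ; exact lt_irrefl _ hθ.2)

/-- The window angle of a point relative to base angle `l`: lies in `Ioc l (l+2π)`. -/
def win (l : ℝ) (z : E2) : ℝ := toIocMod two_pi_pos l (ang z)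

lemma win_mem (l : ℝ) (z : E2) : win l z ∈ Set.Ioc l (l + 2*π) := toIocMod_mem_Ioc _ _ _

lemma cp_win {l : ℝ} {z : E2} (hz : z ∈ circ) : cp (win l z) = z := by
  have h := self_sub_toIocMod two_pi_pos l (ang z)
  have : win l z = ang z + ((-(toIocDiv two_pi_pos l (ang z)) : ℤ) : ℝ) * (2*π) := by
    rw [win]; push_cast; rw [zsmul_eq_mul] at h; linarith
  rw [this, cp_add_int_mul, cp_ang hz]

lemma win_mem_Ioo {l : ℝ} {z : E2} (hz : z ∈ circ) (hne : z ≠ cp l) :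
    win l z ∈ Set.Ioo l (l + 2*π) := by
  rcases win_mem l z with ⟨h1, h2⟩
  rcases lt_or_eq_of_le h2 with h | h
  · exact ⟨h1, h⟩
  · exfalso
    apply hne
    rw [← cp_win (l := l) hz, h, ← cp_add_int_mul l 1]
    norm_num


lemma sin_half_pos {x : ℝ} (h1 : 0 < x) (h2 : x < 2*π) : 0 < Real.sin (x/2) :=
  Real.sin_pos_of_pos_of_lt_pi (by linarith) (by linarith)

lemma sin_half_neg {x : ℝ} (h1 : -(2*π) < x) (h2 : x < 0) : Real.sin (x/2) < 0 := by
  have := sin_half_pos (x := -x) (by linarith) (by linarith)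
  rw [show -x/2 = -(x/2) by ring, Real.sin_neg] at this
  linarith

lemma cross_neg_of_between {α α' β : ℝ} (hα' : α' ∈ Set.Ioo α (α + 2*π))
    (hβ1 : α < β) (hβ2 : β < α') : cross (cp α) (cp α') (cp β) < 0 := by
  rw [cross_cp']
  have S1 := sin_half_pos (x := α' - α) (by linarith [hα'.1]) (by linarith [hα'.2])
  have S2 := sin_half_pos (x := β - α) (by linarith) (by linarith [hα'.2])
  have S3 := sin_half_neg (x := β - α') (by linarith [hα'.1, hα'.2]) (by linarith)
  nlinarith [mul_pos S1 S2, mul_neg_of_pos_of_neg (mul_pos S1 S2) S3]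

lemma cross_pos_of_after {α α' β : ℝ} (hα' : α' ∈ Set.Ioo α (α + 2*π))
    (hβ1 : α' < β) (hβ2 : β < α + 2*π) : 0 < cross (cp α) (cp α') (cp β) := by
  rw [cross_cp']
  have S1 := sin_half_pos (x := α' - α) (by linarith [hα'.1]) (by linarith [hα'.2])
  have S2 := sin_half_pos (x := β - α) (by linarith [hα'.1]) (by linarith)
  have S3 := sin_half_pos (x := β - α') (by linarith) (by linarith [hα'.1])
  nlinarith [mul_pos (mul_pos S1 S2) S3]

lemma mem_pair_of_cross_zero {a a' z : E2} (ha : a ∈ circ) (ha' : a' ∈ circ) (hz : z ∈ circ)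
    (hne : a ≠ a') (h0 : cross a a' z = 0) : z = a ∨ z = a' := by
  set α := ang a with hα
  have haa : cp α = a := cp_ang ha
  have hα' : win α a' ∈ Set.Ioo α (α + 2*π) := win_mem_Ioo ha' (by rw [haa]; exact (Ne.symm hne))
  set α' := win α a'
  have haa' : cp α' = a' := cp_win ha'
  set ζ := win α z
  have hzz : cp ζ = z := cp_win hz
  rw [← haa, ← haa', ← hzz, cross_cp'] at h0
  have S1 := sin_half_pos (x := α' - α) (by linarith [hα'.1]) (by linarith [hα'.2])
  have h0' : Real.sin ((ζ - α)/2) = 0 ∨ Real.sin ((ζ - α')/2) = 0 := by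
    rcases mul_eq_zero.mp (by linarith : 4 * Real.sin ((α' - α)/2) * Real.sin ((ζ - α)/2)
        * Real.sin ((ζ - α')/2) = 0) with h | h
    · rcases mul_eq_zero.mp h with h | h
      · exfalso
        rcases mul_eq_zero.mp h with h | h
        · norm_num at h
        · linarith
      · exact Or.inl h
    · exact Or.inr h
  rcases h0' with h | h
  · left
    obtain ⟨n, hn⟩ := Real.sin_eq_zero_iff.mp h
    rw [← hzz, ← haa]
    exact cp_eq_cp_iff.mpr ⟨n, by linarith⟩ |>.symm
  · right
    obtain ⟨n, hn⟩ := Real.sin_eq_zero_iff.mp h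
    rw [← hzz, ← haa']
    exact cp_eq_cp_iff.mpr ⟨n, by linarith⟩ |>.symm

lemma cross_ne_zero {a a' z : E2} (ha : a ∈ circ) (ha' : a' ∈ circ)
    (hne : a ≠ a') (hz : z ∈ circ \ {a, a'}) : cross a a' z ≠ 0 := by
  intro h0
  rcases mem_pair_of_cross_zero ha ha' hz.1 hne h0 with h | h
  · exact hz.2 (by simp [h])
  · exact hz.2 (by simp [h])

/-- Points whose window angles lie in a common interval mapping into `F` are in the
same connected component of `F`. -/
lemma cp_joined {F : Set E2} {β β' l r : ℝ} (hβ : β ∈ Set.Ioo l r) (hβ' : β' ∈ Set.Ioo l r)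
    (hsub : ∀ θ ∈ Set.Ioo l r, cp θ ∈ F) :
    cp β' ∈ connectedComponentIn F (cp β) := by
  have hconn : IsPreconnected (cp '' Set.Icc (min β β') (max β β')) :=
    isPreconnected_Icc.image _ continuous_cp.continuousOn
  have hsub2 : cp '' Set.Icc (min β β') (max β β') ⊆ F := by
    rintro _ ⟨θ, hθ, rfl⟩
    refine hsub θ ⟨?_, ?_⟩
    · calc l < min β β' := lt_min hβ.1 hβ'.1
        _ ≤ θ := hθ.1
    · calc θ ≤ max β β' := hθ.2
        _ < r := max_lt hβ.2 hβ'.2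
  have hmem : cp β ∈ cp '' Set.Icc (min β β') (max β β') :=
    ⟨β, ⟨min_le_left _ _, le_max_left _ _⟩, rfl⟩
  exact hconn.subset_connectedComponentIn hmem hsub2 ⟨β', ⟨min_le_right _ _, le_max_right _ _⟩, rfl⟩

lemma mem_comp_same_side {a a' b b' : E2} (ha : a ∈ circ) (ha' : a' ∈ circ)
    (hb : b ∈ circ \ {a, a'}) (hb' : b' ∈ circ \ {a, a'})
    (hcase : a = a' ∨ 0 < cross a a' b * cross a a' b') :
    b' ∈ connectedComponentIn (circ \ {a, a'}) b := by
  set α := ang a with hαdef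
  have haa : cp α = a := cp_ang ha
  have hbne : b ≠ a := fun h => hb.2 (by simp [h])
  have hbne' : b' ≠ a := fun h => hb'.2 (by simp [h])
  have hβ : win α b ∈ Set.Ioo α (α + 2*π) := win_mem_Ioo hb.1 (by rw [haa]; exact hbne)
  have hβ' : win α b' ∈ Set.Ioo α (α + 2*π) := win_mem_Ioo hb'.1 (by rw [haa]; exact hbne')
  set β := win α b with hβdef
  set β' := win α b' with hβ'def
  have hcb : cp β = b := cp_win hb.1
  have hcb' : cp β' = b' := cp_win hb'.1
  rcases hcase with hcase | hcase
  · -- a = a', puncture at a only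
    rw [← hcb, ← hcb']
    apply cp_joined hβ hβ'
    intro θ hθ
    refine ⟨cp_mem_circ θ, ?_⟩
    intro hmem
    rcases hmem with h | h
    · exact cp_ne_window hθ (by rwa [haa])
    · rw [← hcase] at h
      exact cp_ne_window hθ (by rw [haa]; exact h)
  · -- same strict side of the chord
    have hne : a ≠ a' := by
      intro h; rw [← h] at hcase; simp at hcase
    have hα' : win α a' ∈ Set.Ioo α (α + 2*π) := win_mem_Ioo ha' (by rw [haa]; exact Ne.symm hne)
    set α' := win α a' with hα'def
    have haa' : cp α' = a' := cp_win ha'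
    have hβa' : β ≠ α' := by
      intro h; apply hb.2; right; rw [← hcb, h, haa']; rfl
    have hβ'a' : β' ≠ α' := by
      intro h; apply hb'.2; right; rw [← hcb', h, haa']; rfl
    -- signs are determined by the side of α'
    have key : ∀ θ : ℝ, θ ∈ Set.Ioo α (α + 2*π) → θ ≠ α' →
        (θ < α' → cross a a' (cp θ) < 0) ∧ (α' < θ → 0 < cross a a' (cp θ)) := by
      intro θ hθ hθne
      constructor
      · intro h
        rw [← haa, ← haa']
        exact cross_neg_of_between hα' hθ.1 h
      · intro h
        rw [← haa, ← haa']
        exact cross_pos_of_after hα' h hθ.2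
    have kb := key β hβ hβa'
    have kb' := key β' hβ' hβ'a'
    rw [← hcb, ← hcb']
    rcases lt_or_gt_of_ne hβa' with h1 | h1
    · rcases lt_or_gt_of_ne hβ'a' with h2 | h2
      · -- both in (α, α')
        apply cp_joined (l := α) (r := α') ⟨hβ.1, h1⟩ ⟨hβ'.1, h2⟩
        intro θ hθ
        refine ⟨cp_mem_circ θ, ?_⟩
        intro hmem
        rcases hmem with h | h
        · exact cp_ne_window ⟨hθ.1, by linarith [hθ.2, hα'.2]⟩ (by rwa [haa])
        · have : θ = α' := cp_inj_window
            ⟨hθ.1, by linarith [hθ.2, hα'.2, two_pi_pos]⟩ (Set.Ioo_subset_Ioc_self hα')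
            (by rw [haa']; exact h)
          linarith [hθ.2, this.symm.le, this ▸ hθ.2]
      · exfalso
        have c1 := kb.1 h1
        have c2 := kb'.2 h2
        rw [hcb] at c1
        rw [hcb'] at c2
        nlinarith
    · rcases lt_or_gt_of_ne hβ'a' with h2 | h2
      · exfalso
        have c1 := kb.2 h1
        have c2 := kb'.1 h2
        rw [hcb] at c1
        rw [hcb'] at c2
        nlinarith
      · -- both in (α', α + 2π)
        apply cp_joined (l := α') (r := α + 2*π) ⟨h1, hβ.2⟩ ⟨h2, hβ'.2⟩
        intro θ hθ
        refine ⟨cp_mem_circ θ, ?_⟩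
        intro hmem
        rcases hmem with h | h
        · exact cp_ne_window ⟨by linarith [hθ.1, hα'.1], hθ.2⟩ (by rwa [haa])
        · have : θ = α' := cp_inj_window
            ⟨by linarith [hθ.1, hα'.1], by linarith [hθ.2, hα'.1]⟩ (Set.Ioo_subset_Ioc_self hα')
            (by rw [haa']; exact h)
          linarith [hθ.1]

lemma not_mem_comp_of_opp_side {a a' b b' : E2} (ha : a ∈ circ) (ha' : a' ∈ circ)
    (hb : b ∈ circ \ {a, a'}) (hb' : b' ∈ circ \ {a, a'})
    (hprod : cross a a' b * cross a a' b' < 0) :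
    b' ∉ connectedComponentIn (circ \ {a, a'}) b := by
  intro hmem
  have hne : a ≠ a' := by
    intro h; rw [← h] at hprod; simp at hprod
  have hconn : IsPreconnected (connectedComponentIn (circ \ {a, a'}) b) :=
    isPreconnected_connectedComponentIn
  have hbmem : b ∈ connectedComponentIn (circ \ {a, a'}) b :=
    mem_connectedComponentIn hb
  have hcont : ContinuousOn (cross a a') (connectedComponentIn (circ \ {a, a'}) b) :=
    (continuous_cross a a').continuousOn
  obtain ⟨z, hz, hz0⟩ : ∃ z ∈ connectedComponentIn (circ \ {a, a'}) b, cross a a' z = 0 := by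
    rcases le_total (cross a a' b) (cross a a' b') with h | h
    · have h0 : (0:ℝ) ∈ Set.Icc (cross a a' b) (cross a a' b') := by
        constructor <;> nlinarith
      obtain ⟨z, hz1, hz2⟩ := hconn.intermediate_value hbmem hmem hcont h0
      exact ⟨z, hz1, hz2⟩
    · have h0 : (0:ℝ) ∈ Set.Icc (cross a a' b') (cross a a' b) := by
        constructor <;> nlinarith
      obtain ⟨z, hz1, hz2⟩ := hconn.intermediate_value hmem hbmem hcont h0
      exact ⟨z, hz1, hz2⟩
  have hzF : z ∈ circ \ {a, a'} := connectedComponentIn_subset _ _ hz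
  exact cross_ne_zero ha ha' hne hzF hz0

lemma sep_iff {a a' b b' : E2} (ha : a ∈ circ) (ha' : a' ∈ circ) :
    SeparatesPair a a' b b' ↔
      b ∈ circ \ {a, a'} ∧ b' ∈ circ \ {a, a'} ∧ cross a a' b * cross a a' b' < 0 := by
  constructor
  · rintro ⟨hb, hb', hnot⟩
    refine ⟨hb, hb', ?_⟩
    have hne : a ≠ a' := by
      intro h
      exact hnot (mem_comp_same_side ha ha' hb hb' (Or.inl h))
    have h1 : cross a a' b ≠ 0 := cross_ne_zero ha ha' hne hb
    have h2 : cross a a' b' ≠ 0 := cross_ne_zero ha ha' hne hb'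
    rcases lt_trichotomy (cross a a' b * cross a a' b') 0 with h | h | h
    · exact h
    · exact absurd h (mul_ne_zero h1 h2)
    · exact absurd (mem_comp_same_side ha ha' hb hb' (Or.inr h)) hnot
  · rintro ⟨hb, hb', hprod⟩
    exact ⟨hb, hb', not_mem_comp_of_opp_side ha ha' hb hb' hprod⟩

lemma mem_segment_of_cross_zero {a a' p : E2} (ha : a ∈ circ) (ha' : a' ∈ circ)
    (hne : a ≠ a') (hp : ‖p‖ ≤ 1) (h0 : cross a a' p = 0) : p ∈ segment ℝ a a' := by
  have hu : a' 0 - a 0 ≠ 0 ∨ a' 1 - a 1 ≠ 0 := by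
    by_contra h
    push_neg at h
    exact hne (ext2 (by linarith [h.1]) (by linarith [h.2])).symm
  obtain ⟨t, ht0, ht1⟩ : ∃ t, p 0 = a 0 + t * (a' 0 - a 0) ∧ p 1 = a 1 + t * (a' 1 - a 1) := by
    rw [cross] at h0
    rcases hu with h | h
    · refine ⟨(p 0 - a 0) / (a' 0 - a 0), by field_simp; ring, ?_⟩
      field_simp
      nlinarith [h0]
    · refine ⟨(p 1 - a 1) / (a' 1 - a 1), ?_, by field_simp; ring⟩
      field_simp
      nlinarith [h0]
  have hna : a 0 ^ 2 + a 1 ^ 2 = 1 := mem_circ_iff.mp ha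
  have hna' : a' 0 ^ 2 + a' 1 ^ 2 = 1 := mem_circ_iff.mp ha'
  have hnp : p 0 ^ 2 + p 1 ^ 2 ≤ 1 := by
    have := norm_sq_eq p
    nlinarith [norm_nonneg p]
  have hU : 0 < (a' 0 - a 0) ^ 2 + (a' 1 - a 1) ^ 2 := by
    rcases hu with h | h
    · have := sq_nonneg (a' 1 - a 1); have := pow_pos (abs_pos.mpr h) 2
      nlinarith [sq_abs (a' 0 - a 0)]
    · have := sq_nonneg (a' 0 - a 0); have := pow_pos (abs_pos.mpr h) 2
      nlinarith [sq_abs (a' 1 - a 1)]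
  have hexp : p 0 ^ 2 + p 1 ^ 2
      = 1 + (t ^ 2 - t) * ((a' 0 - a 0) ^ 2 + (a' 1 - a 1) ^ 2) := by
    rw [ht0, ht1]
    linear_combination (1 - t) * hna + t * hna'
  have hkey : (t ^ 2 - t) * ((a' 0 - a 0) ^ 2 + (a' 1 - a 1) ^ 2) ≤ 0 := by linarith
  have ht2 : t ^ 2 - t ≤ 0 := by nlinarith
  have htIcc : 0 ≤ t ∧ t ≤ 1 := by
    constructor <;> nlinarith [sq_nonneg t, sq_nonneg (t - 1)]
  exact ⟨1 - t, t, by linarith [htIcc.2], htIcc.1, by ring,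
    ext2 (by simp only [PiLp.add_apply, PiLp.smul_apply, smul_eq_mul]; rw [ht0]; ring)
      (by simp only [PiLp.add_apply, PiLp.smul_apply, smul_eq_mul]; rw [ht1]; ring)⟩

lemma seg_inter {a a' b b' : E2} (ha : a ∈ circ) (ha' : a' ∈ circ) (hb : b ∈ circ)
    (hb' : b' ∈ circ) (hprod : cross a a' b * cross a a' b' < 0) :
    (segment ℝ a a' ∩ segment ℝ b b').Nonempty := by
  have hne : a ≠ a' := by
    intro h; rw [← h] at hprod; simp at hprod
  set fb := cross a a' b with hfb
  set fb' := cross a a' b' with hfb'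
  have hdne : fb - fb' ≠ 0 := by
    intro h
    have heq : fb = fb' := by linarith
    rw [heq] at hprod
    nlinarith [sq_nonneg fb']
  set t := fb / (fb - fb') with htdef
  have hsign : (fb < 0 ∧ 0 < fb') ∨ (0 < fb ∧ fb' < 0) := by
    rcases mul_neg_iff.mp hprod with ⟨h1, h2⟩ | ⟨h1, h2⟩
    · exact Or.inr ⟨h1, h2⟩
    · exact Or.inl ⟨h1, h2⟩
  have ht : 0 ≤ t ∧ t ≤ 1 := by
    rw [htdef]
    rcases hsign with ⟨h1, h2⟩ | ⟨h1, h2⟩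
    · constructor
      · rw [div_nonneg_iff]; right; constructor <;> linarith
      · rw [div_le_one_iff]; right; right; constructor <;> linarith
    · constructor
      · rw [div_nonneg_iff]; left; constructor <;> linarith
      · rw [div_le_one_iff]; left; constructor <;> linarith
  set p := (1 - t) • b + t • b' with hpdef
  have hpseg : p ∈ segment ℝ b b' := ⟨1 - t, t, by linarith [ht.2], ht.1, by ring, rfl⟩
  have hp0 : cross a a' p = 0 := by
    rw [hpdef, cross_affine, ← hfb, ← hfb', htdef]
    field_simp
    ring
  have hpball : ‖p‖ ≤ 1 := by
    have hmem : p ∈ closedBall (0 : E2) 1 :=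
      (convex_closedBall (0 : E2) 1).segment_subset
        (sphere_subset_closedBall hb) (sphere_subset_closedBall hb') hpseg
    simpa [mem_closedBall_iff_norm] using hmem
  exact ⟨p, mem_segment_of_cross_zero ha ha' hne hpball hp0, hpseg⟩

lemma cos_ge_of_small {u x : ℝ} (huπ : u ≤ π) (h : |x| ≤ u) : Real.cos u ≤ Real.cos x := by
  rw [← Real.cos_abs x]
  exact Real.cos_le_cos_of_nonneg_of_le_pi (abs_nonneg x) huπ h

lemma cos_lt_of_big {u x : ℝ} (hu0 : 0 ≤ u) (huπ : u < π) (h1 : u < |x|) (h2 : |x| < 2*π - u) :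
    Real.cos x < Real.cos u := by
  rw [← Real.cos_abs x]
  rcases le_or_gt |x| π with h | h
  · exact Real.cos_lt_cos_of_nonneg_of_le_pi hu0 h h1
  · have : Real.cos |x| = Real.cos (2*π - |x|) := by rw [Real.cos_two_pi_sub]
    rw [this]
    exact Real.cos_lt_cos_of_nonneg_of_le_pi hu0 (by linarith) (by linarith)

/-- The dot product with the unit vector at angle `m`, as a linear functional. -/
def dotm (m : ℝ) (z : E2) : ℝ := z 0 * Real.cos m + z 1 * Real.sin m

lemma dotm_linear (m : ℝ) : IsLinearMap ℝ (dotm m) := by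
  constructor
  · intro z w; simp only [dotm, PiLp.add_apply]; ring
  · intro c z; simp only [dotm, PiLp.smul_apply, smul_eq_mul]; ring

lemma dotm_cp (m θ : ℝ) : dotm m (cp θ) = Real.cos (θ - m) := by
  rw [dotm, cp_zero, cp_one, Real.cos_sub]

end HullsAux

open HullsAux in
/-- For disjoint subsets `A, B` of the unit circle, the convex hulls intersect iff
`A` and `B` are linked in the circle. -/
theorem hulls_intersect_iff_linked (A B : Set E2)
    (hA : A ⊆ circ) (hB : B ⊆ circ) (hAB : Disjoint A B) :
    (convexHull ℝ A ∩ convexHull ℝ B).Nonempty ↔ Linked A B := by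
  constructor
  · rintro ⟨x, hxA, hxB⟩
    by_contra hnot
    rw [convexHull_eq_union_convexHull_finite_subsets] at hxA hxB
    simp only [Set.mem_iUnion] at hxA hxB
    obtain ⟨F, hFA, hxF⟩ := hxA
    obtain ⟨G, hGB, hxG⟩ := hxB
    have hFne : F.Nonempty := by
      by_contra h
      rw [Finset.not_nonempty_iff_eq_empty] at h
      rw [h] at hxF
      simp [convexHull_empty] at hxF
    have hGne : G.Nonempty := by
      by_contra h
      rw [Finset.not_nonempty_iff_eq_empty] at h
      rw [h] at hxG
      simp [convexHull_empty] at hxG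
    obtain ⟨g0, hg0⟩ := hGne
    have hg0B : g0 ∈ B := hGB hg0
    have hg0c : g0 ∈ circ := hB hg0B
    set α := ang g0 with hαdef
    have hg0cp : cp α = g0 := cp_ang hg0c
    have hg0rep : cp (α + 2*π) = g0 := by
      rw [← hg0cp, ← cp_add_int_mul α 1]; norm_num
    have hFcirc : ∀ z ∈ F, z ∈ circ := fun z hz => hA (hFA hz)
    have hFA' : ∀ z ∈ F, z ∈ A := fun z hz => hFA hz
    have hFneg0 : ∀ z ∈ F, z ≠ cp α := by
      intro z hz h
      rw [hg0cp] at h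
      exact Set.disjoint_left.mp hAB (hFA' z hz) (h ▸ hg0B)
    have hFwin : ∀ z ∈ F, win α z ∈ Set.Ioo α (α + 2*π) :=
      fun z hz => win_mem_Ioo (hFcirc z hz) (hFneg0 z hz)
    obtain ⟨amin, haminF, hamin⟩ := F.exists_min_image (win α) hFne
    obtain ⟨amax, hamaxF, hamax⟩ := F.exists_max_image (win α) hFne
    set s := win α amin with hsdef
    set tt := win α amax with httdef
    have hscp : cp s = amin := cp_win (hFcirc amin haminF)
    have httcp : cp tt = amax := cp_win (hFcirc amax hamaxF)
    have hsIoo : s ∈ Set.Ioo α (α + 2*π) := hFwin amin haminF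
    have httIoo : tt ∈ Set.Ioo α (α + 2*π) := hFwin amax hamaxF
    have hstt : s ≤ tt := hamin amax hamaxF
    -- every point of G has window angle outside [s, tt]
    have hGavoid : ∀ g ∈ G, g ≠ g0 → win α g < s ∨ tt < win α g := by
      intro g hgG hne
      by_contra hcon
      push_neg at hcon
      obtain ⟨h1, h2⟩ := hcon
      have hgB := hGB hgG
      have hgc := hB hgB
      have hgwin : win α g ∈ Set.Ioo α (α + 2*π) :=
        win_mem_Ioo hgc (fun h => hne (by rw [h, hg0cp]))
      have hgcp : cp (win α g) = g := cp_win hgc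
      have hgA : ∀ z ∈ F, g ≠ z :=
        fun z hz h => Set.disjoint_left.mp hAB (hFA' z hz) (h ▸ hgB)
      have hgs : win α g ≠ s := by
        intro h
        exact hgA amin haminF (by rw [← hgcp, h, hscp])
      have hgtt : win α g ≠ tt := by
        intro h
        exact hgA amax hamaxF (by rw [← hgcp, h, httcp])
      have hs_lt : s < win α g := lt_of_le_of_ne h1 (Ne.symm hgs)
      have htt_gt : win α g < tt := lt_of_le_of_ne h2 hgtt
      have hstt' : tt ∈ Set.Ioo s (s + 2*π) :=
        ⟨lt_trans hs_lt htt_gt, by linarith [httIoo.2, hsIoo.1]⟩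
      apply hnot
      refine ⟨amin, hFA' amin haminF, amax, hFA' amax hamaxF, g, hgB, g0, hg0B, ?_⟩
      rw [sep_iff (hFcirc amin haminF) (hFcirc amax hamaxF)]
      have hg0A : ∀ z ∈ F, g0 ≠ z :=
        fun z hz h => Set.disjoint_left.mp hAB (hFA' z hz) (h ▸ hg0B)
      refine ⟨⟨hgc, ?_⟩, ⟨hg0c, ?_⟩, ?_⟩
      · intro h
        rcases h with h | h
        · exact hgA amin haminF h
        · exact hgA amax hamaxF h
      · intro h
        rcases h with h | h
        · exact hg0A amin haminF h
        · exact hg0A amax hamaxF h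
      · have hneg : cross amin amax g < 0 := by
          rw [← hscp, ← httcp, ← hgcp]
          exact cross_neg_of_between hstt' hs_lt htt_gt
        have hpos : 0 < cross amin amax g0 := by
          rw [← hscp, ← httcp, ← hg0rep]
          exact cross_pos_of_after hstt' httIoo.2 (by linarith [hsIoo.1])
        nlinarith
    -- separating functional
    set m := (s + tt)/2 with hmdef
    set u := (tt - s)/2 with hudef
    have hu0 : 0 ≤ u := by rw [hudef]; linarith
    have huπ : u < π := by
      rw [hudef]
      have := hsIoo.1; have := httIoo.2
      linarith
    have hFside : ∀ z ∈ F, Real.cos u ≤ dotm m z := by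
      intro z hz
      have hcp : cp (win α z) = z := cp_win (hFcirc z hz)
      rw [← hcp, dotm_cp]
      apply cos_ge_of_small (le_of_lt huπ)
      have h1 := hamin z hz
      have h2 := hamax z hz
      rw [abs_le]; constructor <;> [skip; skip] <;> simp only [hmdef, hudef] <;> linarith
    have hGside : ∀ z ∈ G, dotm m z < Real.cos u := by
      intro z hz
      have hzB := hGB hz
      have hzc := hB hzB
      by_cases hzg0 : z = g0
      · rw [hzg0, ← hg0rep, dotm_cp]
        apply cos_lt_of_big hu0 huπ
        · rw [lt_abs]; left
          simp only [hmdef, hudef]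
          linarith [httIoo.2]
        · rw [abs_lt]; constructor <;> simp only [hmdef, hudef] <;> linarith [hsIoo.1, httIoo.2]
      · have hcp : cp (win α z) = z := cp_win hzc
        have hzwin : win α z ∈ Set.Ioo α (α + 2*π) :=
          win_mem_Ioo hzc (fun h => hzg0 (by rw [h, hg0cp]))
        rw [← hcp, dotm_cp]
        apply cos_lt_of_big hu0 huπ
        · rcases hGavoid z hz hzg0 with h | h
          · rw [lt_abs]; right; simp only [hmdef, hudef]; linarith
          · rw [lt_abs]; left; simp only [hmdef, hudef]; linarith
        · rw [abs_lt]
          constructor <;> simp only [hmdef, hudef] <;>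
            linarith [hzwin.1, hzwin.2, hsIoo.1, httIoo.2]
    have hxF' : Real.cos u ≤ dotm m x := by
      have : convexHull ℝ (↑F : Set E2) ⊆ {z | Real.cos u ≤ dotm m z} :=
        convexHull_min (fun z hz => hFside z hz) (convex_halfSpace_ge (dotm_linear m) _)
      exact this hxF
    have hxG' : dotm m x < Real.cos u := by
      have : convexHull ℝ (↑G : Set E2) ⊆ {z | dotm m z < Real.cos u} :=
        convexHull_min (fun z hz => hGside z hz) (convex_halfSpace_lt (dotm_linear m) _)
      exact this hxG
    linarith
  · rintro ⟨a, haA, a', ha'A, b, hbB, b', hb'B, hsep⟩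
    rw [sep_iff (hA haA) (hA ha'A)] at hsep
    obtain ⟨hb, hb', hprod⟩ := hsep
    obtain ⟨p, hp1, hp2⟩ := seg_inter (hA haA) (hA ha'A) hb.1 hb'.1 hprod
    exact ⟨p, segment_subset_convexHull haA ha'A hp1, segment_subset_convexHull hbB hb'B hp2⟩

end
end

section
/- Let A₁, A₂, … be closed subsets of the unit circle S¹ ⊆ ℝ². Then the sequence (Aᵢ) Kuratowski-converges if and only if the sequence of convex hulls (conv(Aᵢ)) Kuratowski-converges, and in that case lim conv(Aᵢ) = conv(lim Aᵢ). -/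
open Filter Topology Metric

noncomputable section

/-- Kuratowski limit superior. -/
def kLimsup (A : ℕ → Set E2) : Set E2 :=
  {x | ∀ U ∈ nhds x, {i | (A i ∩ U).Nonempty}.Infinite}

/-- Kuratowski limit inferior. -/
def kLiminf (A : ℕ → Set E2) : Set E2 :=
  {x | ∀ U ∈ nhds x, ∀ᶠ i in atTop, (A i ∩ U).Nonempty}

lemma kLiminf_subset_kLimsup (A : ℕ → Set E2) : kLiminf A ⊆ kLimsup A := by
  intro x hx U hU
  obtain ⟨N, hN⟩ := eventually_atTop.mp (hx U hU)
  exact Set.Infinite.mono (fun i hi => hN i hi) (Set.Ici_infinite N)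

lemma kLimsup_mono {A B : ℕ → Set E2} (h : ∀ i, A i ⊆ B i) : kLimsup A ⊆ kLimsup B := by
  intro x hx U hU
  refine Set.Infinite.mono (fun i hi => ?_) (hx U hU)
  obtain ⟨p, hp1, hp2⟩ := hi
  exact ⟨p, h i hp1, hp2⟩

lemma kLiminf_mono {A B : ℕ → Set E2} (h : ∀ i, A i ⊆ B i) : kLiminf A ⊆ kLiminf B := by
  intro x hx U hU
  filter_upwards [hx U hU] with i hi
  obtain ⟨p, hp1, hp2⟩ := hi
  exact ⟨p, h i hp1, hp2⟩

lemma kLimsup_subset_closed {A : ℕ → Set E2} {C : Set E2} (hC : IsClosed C)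
    (h : ∀ i, A i ⊆ C) : kLimsup A ⊆ C := by
  intro x hx
  by_contra hxC
  have hU : Cᶜ ∈ nhds x := hC.isOpen_compl.mem_nhds hxC
  refine hx Cᶜ hU ?_
  convert Set.finite_empty
  ext i
  simp only [Set.mem_setOf_eq, Set.mem_empty_iff_false, iff_false]
  rintro ⟨p, hp1, hp2⟩
  exact hp2 (h i hp1)

/-- If a compact set meets infinitely many of the `Aᵢ`, it meets their Kuratowski limsup. -/
lemma exists_mem_kLimsup_of_infinite {A : ℕ → Set E2} {K : Set E2} (hK : IsCompact K)
    (h : {i | (A i ∩ K).Nonempty}.Infinite) : ∃ x ∈ K, x ∈ kLimsup A := by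
  have hfreq : ∃ᶠ i in atTop, (A i ∩ K).Nonempty :=
    Nat.frequently_atTop_iff_infinite.mpr h
  obtain ⟨φ, hφ, hφP⟩ := Filter.extraction_of_frequently_atTop hfreq
  choose p hpA hpK using hφP
  obtain ⟨a, haK, ψ, hψ, hlim⟩ := hK.tendsto_subseq hpK
  refine ⟨a, haK, fun U hU => ?_⟩
  obtain ⟨N, hN⟩ := eventually_atTop.mp (hlim hU)
  have hinj : Function.Injective fun n => φ (ψ (n + N)) := by
    intro m n hmn
    have := (hφ.comp hψ).injective hmn
    omega
  exact Set.infinite_of_injective_forall_mem hinj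
    (fun n => ⟨p (ψ (n + N)), hpA _, hN _ (Nat.le_add_left N n)⟩)

/-- The Kuratowski liminf of convex sets is convex. -/
lemma kLiminf_convex {B : ℕ → Set E2} (hB : ∀ i, Convex ℝ (B i)) :
    Convex ℝ (kLiminf B) := by
  intro x hx y hy a b ha hb hab
  intro U hU
  obtain ⟨ε, hε, hball⟩ := Metric.mem_nhds_iff.mp hU
  have hx' := hx (ball x (ε / 2)) (ball_mem_nhds x (by positivity))
  have hy' := hy (ball y (ε / 2)) (ball_mem_nhds y (by positivity))
  filter_upwards [hx', hy'] with i hix hiy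
  obtain ⟨px, hpxB, hpx⟩ := hix
  obtain ⟨py, hpyB, hpy⟩ := hiy
  refine ⟨a • px + b • py, hB i hpxB hpyB ha hb hab, hball ?_⟩
  have heq : a • px + b • py - (a • x + b • y) = a • (px - x) + b • (py - y) := by
    simp [smul_sub]; abel
  have hle : ‖a • px + b • py - (a • x + b • y)‖ ≤ a * ‖px - x‖ + b * ‖py - y‖ := by
    rw [heq]
    refine (norm_add_le _ _).trans ?_
    rw [norm_smul, norm_smul, Real.norm_eq_abs, Real.norm_eq_abs, abs_of_nonneg ha,
      abs_of_nonneg hb]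
  have h1 : a * ‖px - x‖ ≤ a * (ε / 2) :=
    mul_le_mul_of_nonneg_left (le_of_lt (by simpa [dist_eq_norm] using hpx)) ha
  have h2 : b * ‖py - y‖ ≤ b * (ε / 2) :=
    mul_le_mul_of_nonneg_left (le_of_lt (by simpa [dist_eq_norm] using hpy)) hb
  have hfin : ‖a • px + b • py - (a • x + b • y)‖ ≤ ε / 2 := by
    calc ‖a • px + b • py - (a • x + b • y)‖ ≤ a * ‖px - x‖ + b * ‖py - y‖ := hle
    _ ≤ a * (ε / 2) + b * (ε / 2) := add_le_add h1 h2
    _ = ε / 2 := by rw [← add_mul, hab, one_mul]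
  rw [mem_ball, dist_eq_norm]
  linarith

/-- Summing a `dite` extension along an embedding. -/
lemma sum_dite_embedding {ι κ M : Type*} [Fintype ι] [Fintype κ] [DecidableEq κ]
    [AddCommMonoid M] (e : ι ↪ κ) (g : ι → M) :
    ∑ j, (if h : ∃ i, e i = j then g h.choose else 0) = ∑ i, g i := by
  rw [← Finset.sum_subset (Finset.subset_univ (Finset.univ.image e))
      (fun j _ hj => dif_neg (fun ⟨i, hi⟩ => hj (Finset.mem_image.mpr ⟨i, Finset.mem_univ i, hi⟩)))]
  rw [Finset.sum_image (fun i _ j _ h => e.injective h)]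
  refine Finset.sum_congr rfl fun i _ => ?_
  have h : ∃ i', e i' = e i := ⟨i, rfl⟩
  rw [dif_pos h]
  congr 1
  exact e.injective h.choose_spec

/-- The convex hull of a compact set in the plane is compact (Carathéodory). -/
lemma isCompact_convexHull_E2 {s : Set E2} (hs : IsCompact s) :
    IsCompact (convexHull ℝ s) := by
  classical
  rcases s.eq_empty_or_nonempty with rfl | ⟨x₀, hx₀⟩
  · simpa using isCompact_empty
  have himage : convexHull ℝ s =
      (fun p : (Fin 3 → ℝ) × (Fin 3 → E2) => ∑ j, p.1 j • p.2 j) ''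
        (stdSimplex ℝ (Fin 3) ×ˢ Set.univ.pi fun _ => s) := by
    apply Set.Subset.antisymm
    · intro x hx
      obtain ⟨ι, hι, z, w, hzs, hai, hw0, hw1, hwz⟩ := eq_pos_convex_span_of_mem_convexHull hx
      have hcard : Fintype.card ι ≤ 3 := by
        have h1 := hai.card_le_finrank_succ
        have h2 : Module.finrank ℝ ↥(vectorSpan ℝ (Set.range z)) ≤ Module.finrank ℝ E2 :=
          Submodule.finrank_le _
        have h3 : Module.finrank ℝ E2 = 2 := by
          simpa using finrank_euclideanSpace (𝕜 := ℝ) (ι := Fin 2)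
        omega
      obtain ⟨e⟩ : Nonempty (ι ↪ Fin 3) :=
        Function.Embedding.nonempty_of_card_le (by simpa using hcard)
      refine ⟨(fun j => if h : ∃ i, e i = j then w h.choose else 0,
               fun j => if h : ∃ i, e i = j then z h.choose else x₀), ⟨⟨?_, ?_⟩, ?_⟩, ?_⟩
      · intro j
        dsimp only
        split
        · exact le_of_lt (hw0 _)
        · exact le_refl 0
      · rw [sum_dite_embedding e w]
        exact hw1
      · intro j _
        dsimp only
        split
        · exact hzs (Set.mem_range_self _)
        · exact hx₀
      · dsimp only
        have : ∀ j : Fin 3,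
            (if h : ∃ i, e i = j then w h.choose else 0) •
              (if h : ∃ i, e i = j then z h.choose else x₀) =
            (if h : ∃ i, e i = j then w h.choose • z h.choose else 0) := by
          intro j
          by_cases h : ∃ i, e i = j
          · simp [h]
          · simp [h]
        rw [Finset.sum_congr rfl fun j _ => this j,
          sum_dite_embedding e (fun i => w i • z i)]
        exact hwz
    · rintro x ⟨⟨wv, zv⟩, ⟨⟨hw0, hw1⟩, hz⟩, rfl⟩
      exact Convex.sum_mem (convex_convexHull ℝ s) (fun j _ => hw0 j) hw1
        (fun j _ => subset_convexHull ℝ s (hz j (Set.mem_univ j)))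
  rw [himage]
  refine IsCompact.image ((isCompact_stdSimplex _ _).prod (isCompact_univ_pi fun _ => hs)) ?_
  exact continuous_finset_sum _ fun j _ =>
    ((continuous_apply j).comp continuous_fst).smul ((continuous_apply j).comp continuous_snd)

lemma kLimsup_isClosed (A : ℕ → Set E2) : IsClosed (kLimsup A) := by
  rw [← isOpen_compl_iff, isOpen_iff_mem_nhds]
  intro y hy
  simp only [Set.mem_compl_iff, kLimsup, Set.mem_setOf_eq, not_forall] at hy
  obtain ⟨U, hU, hfin⟩ := hy
  rw [Set.not_infinite] at hfin
  obtain ⟨V, hVU, hVopen, hyV⟩ := _root_.mem_nhds_iff.mp hU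
  filter_upwards [hVopen.mem_nhds hyV] with z hz
  simp only [Set.mem_compl_iff, kLimsup, Set.mem_setOf_eq, not_forall]
  refine ⟨V, hVopen.mem_nhds hz, ?_⟩
  rw [Set.not_infinite]
  refine hfin.subset fun i hi => ?_
  obtain ⟨p, hp1, hp2⟩ := hi
  exact ⟨p, hp1, hVU hp2⟩

/-- Separation: the limsup of the hulls is contained in the hull of the limsup. -/
lemma kLimsup_hull_subset {A : ℕ → Set E2} (hAS : ∀ i, A i ⊆ sphere (0 : E2) 1) :
    kLimsup (fun i => convexHull ℝ (A i)) ⊆ convexHull ℝ (kLimsup A) := by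
  intro x hx
  by_contra hxc
  have hLsub : kLimsup A ⊆ sphere (0 : E2) 1 :=
    kLimsup_subset_closed isClosed_sphere hAS
  have hLcompact : IsCompact (kLimsup A) :=
    (isCompact_sphere (0 : E2) 1).of_isClosed_subset (kLimsup_isClosed A) hLsub
  have hhull : IsCompact (convexHull ℝ (kLimsup A)) := isCompact_convexHull_E2 hLcompact
  obtain ⟨f, u, hfu, hux⟩ :=
    geometric_hahn_banach_closed_point (convex_convexHull ℝ _) hhull.isClosed hxc
  set K : Set E2 := sphere (0 : E2) 1 ∩ {y | u ≤ f y} with hKdef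
  have hKcompact : IsCompact K :=
    (isCompact_sphere (0 : E2) 1).inter_right (isClosed_le continuous_const f.continuous)
  have hfin : {i | (A i ∩ K).Nonempty}.Finite := by
    rw [← Set.not_infinite]
    intro hinf
    obtain ⟨z, hzK, hzL⟩ := exists_mem_kLimsup_of_infinite hKcompact hinf
    have h1 : f z < u := hfu z (subset_convexHull ℝ _ hzL)
    have h2 : u ≤ f z := hzK.2
    linarith
  have hhalf : ∀ i ∉ {i | (A i ∩ K).Nonempty}, convexHull ℝ (A i) ⊆ {y | f y < u} := by
    intro i hi
    apply convexHull_min _ (convex_halfSpace_lt (LinearMap.isLinear (f : E2 →ₗ[ℝ] ℝ)) u)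
    intro p hp
    show f p < u
    by_contra hfp
    exact hi ⟨p, hp, hAS i hp, not_lt.mp hfp⟩
  have hUopen : IsOpen {y : E2 | u < f y} := isOpen_lt continuous_const f.continuous
  refine hx {y | u < f y} (hUopen.mem_nhds hux) ?_
  refine hfin.subset ?_
  rintro i ⟨p, hp1, hp2⟩
  by_contra hi
  have h1 : f p < u := hhalf i hi hp1
  have h2 : u < f p := hp2
  linarith

/-- Strict convexity of the circle: nearby points of the hull force nearby points of `Aᵢ`. -/
lemma mem_kLiminf_of_hull {A : ℕ → Set E2} (hAS : ∀ i, A i ⊆ sphere (0 : E2) 1)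
    {x : E2} (hxn : ‖x‖ = 1) (hx : x ∈ kLiminf (fun i => convexHull ℝ (A i))) :
    x ∈ kLiminf A := by
  intro U hU
  obtain ⟨ε, hε, hball⟩ := Metric.mem_nhds_iff.mp hU
  set c : ℝ := 1 - ε ^ 2 / 2 with hc
  have hUopen : IsOpen {y : E2 | c < inner ℝ x y} :=
    isOpen_lt continuous_const (innerSL ℝ x).continuous
  have hxU : x ∈ {y : E2 | c < inner ℝ x y} := by
    show c < inner ℝ x x
    rw [real_inner_self_eq_norm_sq, hxn, hc]
    nlinarith [mul_pos hε hε]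
  filter_upwards [hx {y | c < inner ℝ x y} (hUopen.mem_nhds hxU)] with i hi
  obtain ⟨q, hq1, hq2⟩ := hi
  by_contra hno
  have hAfar : A i ⊆ {y : E2 | inner ℝ x y ≤ c} := by
    intro p hp
    have hpn : ‖p‖ = 1 := by simpa using mem_sphere_zero_iff_norm.mp (hAS i hp)
    have hdist : ε ≤ ‖x - p‖ := by
      by_contra hlt
      push_neg at hlt
      exact hno ⟨p, hp, hball (by rwa [mem_ball, dist_comm, dist_eq_norm])⟩
    have hexp : ‖x - p‖ ^ 2 = ‖x‖ ^ 2 - 2 * inner ℝ x p + ‖p‖ ^ 2 := norm_sub_sq_real x p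
    have hsq : ε ^ 2 ≤ ‖x - p‖ ^ 2 := by nlinarith [norm_nonneg (x - p)]
    show (inner ℝ x p : ℝ) ≤ c
    rw [hxn, hpn] at hexp
    rw [hc]
    nlinarith
  have hsubset : convexHull ℝ (A i) ⊆ {y : E2 | inner ℝ x y ≤ c} :=
    convexHull_min hAfar
      (convex_halfSpace_le (LinearMap.isLinear ((innerSL ℝ x) : E2 →ₗ[ℝ] ℝ)) c)
  have h1 : (inner ℝ x q : ℝ) ≤ c := hsubset hq1
  have h2 : c < (inner ℝ x q : ℝ) := hq2
  linarith

/-- For closed subsets `Aᵢ` of the unit circle: the `Aᵢ` Kuratowski-converge iff the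
convex hulls `conv(Aᵢ)` Kuratowski-converge, and in that case
`lim conv(Aᵢ) = conv (lim Aᵢ)`. -/
theorem hulls_converge_iff (A : ℕ → Set E2)
    (hAcl : ∀ i, IsClosed (A i)) (hAS : ∀ i, A i ⊆ sphere (0 : E2) 1) :
    (kLimsup A = kLiminf A ↔
        kLimsup (fun i => convexHull ℝ (A i)) = kLiminf (fun i => convexHull ℝ (A i))) ∧
      (kLimsup A = kLiminf A →
        kLimsup (fun i => convexHull ℝ (A i)) = convexHull ℝ (kLimsup A)) := by
  have hsub : ∀ i, A i ⊆ convexHull ℝ (A i) := fun i => subset_convexHull ℝ _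
  have forward : kLimsup A = kLiminf A →
      kLimsup (fun i => convexHull ℝ (A i)) ⊆ convexHull ℝ (kLimsup A) ∧
      convexHull ℝ (kLimsup A) ⊆ kLiminf (fun i => convexHull ℝ (A i)) := by
    intro h
    refine ⟨kLimsup_hull_subset hAS, ?_⟩
    apply convexHull_min
    · calc kLimsup A = kLiminf A := h
        _ ⊆ kLiminf (fun i => convexHull ℝ (A i)) := kLiminf_mono hsub
    · exact kLiminf_convex fun i => convex_convexHull ℝ _
  constructor
  · constructor
    · intro h
      obtain ⟨h1, h2⟩ := forward h
      exact subset_antisymm (h1.trans h2) (kLiminf_subset_kLimsup _)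
    · intro h
      refine subset_antisymm ?_ (kLiminf_subset_kLimsup _)
      intro x hx
      have hxn : ‖x‖ = 1 := by
        simpa using mem_sphere_zero_iff_norm.mp
          (kLimsup_subset_closed isClosed_sphere hAS hx)
      have hx' : x ∈ kLiminf (fun i => convexHull ℝ (A i)) := by
        rw [← h]
        exact kLimsup_mono hsub hx
      exact mem_kLiminf_of_hull hAS hxn hx'
  · intro h
    obtain ⟨h1, h2⟩ := forward h
    exact subset_antisymm h1 (h2.trans (kLiminf_subset_kLimsup _))

end
end

section
/- Let A, B ⊆ S¹ be disjoint, closed, nonempty subsets of the circle. Fix an orientation of S¹. Then the following four collections of open intervals all have the same finite cardinality n ≥ 1: (i) complementary intervals of A that meet B; (ii) complementary intervals of B that meet A; (iii) complementary intervals of A ∪ B of the form (a,b) with a ∈ A, b ∈ B; (iv) complementary intervals of A ∪ B of the form (b,a) with b ∈ B, a ∈ A. -/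
noncomputable section

/-- The circle, modelled as `ℝ/ℤ` with its natural orientation. -/
abbrev S1 := AddCircle (1 : ℝ)

/-- The positively oriented open arc from `a` to `b` (for `a ≠ b`): the points of the
form `a + s` where `0 < s < t < 1` and `b = a + t`. -/
def posArc (a b : S1) : Set S1 :=
  {x | ∃ s t : ℝ, 0 < s ∧ s < t ∧ t < 1 ∧ b = a + (t : ℝ) ∧ x = a + (s : ℝ)}

/-- `U` is a complementary interval of `C`: a connected component of `S¹ \ C`. -/
def IsComplInterval (C U : Set S1) : Prop :=
  ∃ x ∈ Cᶜ, U = connectedComponentIn Cᶜ x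

instance : Fact ((0:ℝ) < 1) := ⟨one_pos⟩

instance : LocallyConnectedSpace S1 := by
  rw [locallyConnectedSpace_iff_subsets_isOpen_isConnected]
  intro x U hU
  obtain ⟨r, rfl⟩ : ∃ r : ℝ, (r : S1) = x := Quotient.exists_rep x
  have hc : Continuous ((↑) : ℝ → S1) := AddCircle.continuous_mk' 1
  have hU' : ((↑) : ℝ → S1) ⁻¹' U ∈ nhds r := hc.continuousAt hU
  obtain ⟨δ, hδ, hball⟩ := Metric.mem_nhds_iff.mp hU'
  refine ⟨((↑) : ℝ → S1) '' Metric.ball r δ, ?_, ?_, ?_, ?_⟩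
  · rintro _ ⟨s, hs, rfl⟩; exact hball hs
  · exact (QuotientAddGroup.isOpenMap_coe (N := AddSubgroup.zmultiples (1:ℝ))) _ Metric.isOpen_ball
  · exact ⟨r, Metric.mem_ball_self hδ, rfl⟩
  · exact ⟨⟨_, ⟨r, Metric.mem_ball_self hδ, rfl⟩⟩,
      (convex_ball r δ).isPreconnected.image _ hc.continuousOn⟩

/-- coordinate of `x` relative to basepoint `c`: the unique `r ∈ [0,1)` with `x = c + r`. -/
def cLift (c x : S1) : ℝ := ((AddCircle.equivIco 1 0 (x - c)) : ℝ)

lemma cLift_mem_Ico (c x : S1) : cLift c x ∈ Set.Ico (0:ℝ) 1 := by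
  have := (AddCircle.equivIco 1 0 (x - c)).2
  simpa [cLift] using this

lemma coe_cLift (c x : S1) : c + ((cLift c x : ℝ) : S1) = x := by
  have : (((AddCircle.equivIco 1 0 (x - c)) : ℝ) : S1) = x - c :=
    (AddCircle.equivIco 1 0).symm_apply_apply (x - c)
  rw [cLift, this]; abel

lemma cLift_coe (c : S1) {r : ℝ} (hr : r ∈ Set.Ico (0:ℝ) 1) : cLift c (c + (r : S1)) = r := by
  have h1 : ((cLift c (c + (r:S1)) : ℝ) : S1) = (r : S1) :=
    add_left_cancel (a := c) (coe_cLift c (c + (r:S1)))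
  have h2 := cLift_mem_Ico c (c + (r:S1))
  have := AddCircle.coe_eq_coe_iff_of_mem_Ico (p := (1:ℝ)) (a := 0)
    (by simpa using h2) (by simpa using hr)
  exact this.mp h1

lemma cLift_inj (c : S1) {x y : S1} (h : cLift c x = cLift c y) : x = y := by
  have hx := coe_cLift c x; have hy := coe_cLift c y
  rw [← hx, ← hy, h]

lemma continuousAt_cLift (c : S1) {x : S1} (hx : x ≠ c) : ContinuousAt (cLift c) x := by
  have h1 : ContinuousAt (fun y : S1 => y - c) x := by fun_prop
  have h2 : ContinuousAt (AddCircle.equivIco 1 0) (x - c) := by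
    apply AddCircle.continuousAt_equivIco
    intro h
    apply hx
    rw [sub_eq_iff_eq_add] at h
    simpa using h
  have : ContinuousAt ((Subtype.val) ∘ (AddCircle.equivIco 1 0) ∘ (fun y : S1 => y - c)) x :=
    ContinuousAt.comp (Continuous.continuousAt continuous_subtype_val) (ContinuousAt.comp h2 h1)
  exact this

lemma coe_eq_coe_small {u v : ℝ} (h : (u : S1) = v) (h2 : |u - v| < 1) : u = v := by
  rw [QuotientAddGroup.eq_iff_sub_mem] at h
  obtain ⟨n, hn⟩ := AddSubgroup.mem_zmultiples_iff.mp h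
  simp only [zsmul_eq_mul, mul_one] at hn
  have hn' : |(n:ℝ)| < 1 := by rw [hn]; exact h2
  have : |n| < 1 := by exact_mod_cast (by push_cast; exact hn' : ((|n| : ℤ) : ℝ) < 1)
  have : n = 0 := Int.abs_lt_one_iff.mp this
  have := hn.symm; rw [‹n = 0›] at this; push_cast at this; linarith

lemma posArc_coord (c : S1) {α τ : ℝ} (h0 : 0 ≤ α) (hατ : α < τ) (hτ : τ < 1) :
    posArc (c + (α : ℝ)) (c + (τ : ℝ)) = {x | α < cLift c x ∧ cLift c x < τ} := by
  ext x
  constructor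
  · rintro ⟨s, t, hs, hst, ht1, hb, hx⟩
    have hcoe : ((α + t : ℝ) : S1) = ((τ : ℝ) : S1) := by
      rw [AddCircle.coe_add]
      apply add_left_cancel (a := c)
      rw [← add_assoc, ← hb]
    have ht : α + t = τ := by
      apply coe_eq_coe_small hcoe
      rw [abs_lt]; constructor <;> nlinarith
    have hxα : x = c + ((α + s : ℝ) : S1) := by
      rw [hx, AddCircle.coe_add, add_assoc]
    have hmem : α + s ∈ Set.Ico (0:ℝ) 1 := ⟨by linarith, by linarith⟩
    have : cLift c x = α + s := by rw [hxα]; exact cLift_coe c hmem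
    exact ⟨by linarith [this], by rw [this]; linarith⟩
  · rintro ⟨h1, h2⟩
    refine ⟨cLift c x - α, τ - α, by linarith, by linarith, by linarith, ?_, ?_⟩
    · rw [add_assoc, ← AddCircle.coe_add]; norm_num
    · have := coe_cLift c x
      rw [add_assoc, ← AddCircle.coe_add]
      norm_num
      exact this.symm
  

lemma continuous_basept (c : S1) : Continuous (fun r : ℝ => c + ((r : ℝ) : S1)) :=
  continuous_const.add (AddCircle.continuous_mk' 1)

lemma image_cLift {c : S1} {W : Set S1} (hW : c ∉ W) :
    cLift c '' W = Set.Ioo (0:ℝ) 1 ∩ (fun r : ℝ => c + ((r:ℝ) : S1)) ⁻¹' W := by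
  ext r
  constructor
  · rintro ⟨x, hx, rfl⟩
    have hco := coe_cLift c x
    have hIco := cLift_mem_Ico c x
    have hne : cLift c x ≠ 0 := by
      intro h0
      have hxc : x = c := by rw [← hco, h0]; simp
      apply hW; rwa [hxc] at hx
    exact ⟨⟨lt_of_le_of_ne hIco.1 (Ne.symm hne), hIco.2⟩, by simpa [hco] using hx⟩
  · rintro ⟨hr, hx⟩
    exact ⟨c + ((r:ℝ):S1), hx, cLift_coe c ⟨hr.1.le, hr.2⟩⟩

lemma isOpen_image_cLift {c : S1} {W : Set S1} (hW : c ∉ W) (ho : IsOpen W) :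
    IsOpen (cLift c '' W) := by
  rw [image_cLift hW]
  exact isOpen_Ioo.inter (ho.preimage (continuous_basept c))

lemma ordConnected_image_cLift {c : S1} {W : Set S1} (hW : W ⊆ {c}ᶜ)
    (hconn : IsPreconnected W) : (cLift c '' W).OrdConnected := by
  apply IsPreconnected.ordConnected
  apply hconn.image
  exact fun x hx => (continuousAt_cLift c (hW hx)).continuousWithinAt

lemma mem_of_cLift_mem_image {c : S1} {W : Set S1} {r : ℝ} (hr : r ∈ Set.Ico (0:ℝ) 1)
    (h : r ∈ cLift c '' W) : c + ((r:ℝ):S1) ∈ W := by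
  obtain ⟨x, hx, hxr⟩ := h
  have := coe_cLift c x
  subst hxr
  rwa [this]

lemma real_ioo_lemma {V : Set ℝ} (hne : V.Nonempty) (ho : IsOpen V) (hoc : V.OrdConnected)
    (hbd : BddBelow V) (hbd' : BddAbove V) : V = Set.Ioo (sInf V) (sSup V) := by
  ext y
  constructor
  · intro hy
    refine ⟨lt_of_le_of_ne (csInf_le hbd hy) ?_, lt_of_le_of_ne (le_csSup hbd' hy) ?_⟩
    · intro h
      obtain ⟨ε, hε, hball⟩ := Metric.isOpen_iff.mp ho y hy
      have : y - ε/2 ∈ V := hball (by rw [Metric.mem_ball, Real.dist_eq, abs_of_neg (by linarith : y - ε/2 - y < 0)]; linarith)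
      have := csInf_le hbd this
      rw [← h] at this; linarith
    · intro h
      obtain ⟨ε, hε, hball⟩ := Metric.isOpen_iff.mp ho y hy
      have : y + ε/2 ∈ V := hball (by rw [Metric.mem_ball, Real.dist_eq, abs_of_pos (by linarith : (0:ℝ) < y + ε/2 - y)]; linarith)
      have := le_csSup hbd' this
      rw [h] at this; linarith
  · rintro ⟨h1, h2⟩
    obtain ⟨v₁, hv₁, hv₁y⟩ := (csInf_lt_iff hbd hne).mp h1
    obtain ⟨v₂, hv₂, hyv₂⟩ := (lt_csSup_iff hbd' hne).mp h2
    exact hoc.out hv₁ hv₂ ⟨hv₁y.le, hyv₂.le⟩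

lemma cLift_mem_image_iff (c : S1) {W : Set S1} {x : S1} :
    cLift c x ∈ cLift c '' W ↔ x ∈ W := by
  constructor
  · rintro ⟨w, hw, hwx⟩; rwa [cLift_inj c hwx] at hw
  · exact fun h => ⟨x, h, rfl⟩

lemma coord_set_eq_image (c : S1) {α τ : ℝ} (h0 : 0 ≤ α) (h1 : τ ≤ 1) :
    {x | α < cLift c x ∧ cLift c x < τ} = (fun r : ℝ => c + ((r:ℝ):S1)) '' Set.Ioo α τ := by
  ext x
  constructor
  · rintro ⟨hx1, hx2⟩
    exact ⟨cLift c x, ⟨hx1, hx2⟩, coe_cLift c x⟩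
  · rintro ⟨r, ⟨hr1, hr2⟩, rfl⟩
    rw [Set.mem_setOf_eq, cLift_coe c ⟨by linarith, by linarith⟩]
    exact ⟨hr1, hr2⟩

lemma isPreconnected_coord_set (c : S1) {α τ : ℝ} (h0 : 0 ≤ α) (h1 : τ ≤ 1) :
    IsPreconnected {x | α < cLift c x ∧ cLift c x < τ} := by
  rw [coord_set_eq_image c h0 h1]
  exact isPreconnected_Ioo.image _ (continuous_basept c).continuousOn

lemma posArc_eq_coord {a b : S1} {t : ℝ} (hb : b = a + ((t:ℝ):S1)) (h0 : 0 < t) (h1 : t < 1) :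
    posArc a b = {x | 0 < cLift a x ∧ cLift a x < t} := by
  have := posArc_coord a (le_refl (0:ℝ)) h0 h1
  simpa [hb] using this

/-- `posArc a b ∪ {b}` is preconnected. -/
lemma posArc_union_endpoint_preconnected {a b : S1} {t : ℝ} (hb : b = a + ((t:ℝ):S1))
    (h0 : 0 < t) (h1 : t < 1) : IsPreconnected (posArc a b ∪ {b}) := by
  have himg : posArc a b ∪ {b} = (fun r : ℝ => a + ((r:ℝ):S1)) '' Set.Ioc 0 t := by
    rw [posArc_eq_coord hb h0 h1, coord_set_eq_image a (le_refl 0) h1.le,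
      ← Set.Ioo_union_right h0, Set.image_union]
    simp [hb]
  rw [himg]
  exact isPreconnected_Ioc.image _ (continuous_basept a).continuousOn

def compMap (A : Set S1) (U : Set S1) : Set S1 := ⋃ x ∈ U, connectedComponentIn Aᶜ x

lemma compMap_eq {A U : Set S1} {x : S1} (hU : IsPreconnected U) (hx : x ∈ U) (hUA : U ⊆ Aᶜ) :
    compMap A U = connectedComponentIn Aᶜ x := by
  apply subset_antisymm
  · apply Set.iUnion₂_subset
    intro y hy
    rw [← connectedComponentIn_eq (hU.subset_connectedComponentIn hx hUA hy)]
  · exact Set.subset_biUnion_of_mem hx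

/-- Structure of a nonempty set of the form `posArc a b`. -/
lemma posArc_struct {a b : S1} {x₀ : S1} (hx₀ : x₀ ∈ posArc a b) :
    ∃ t : ℝ, 0 < t ∧ t < 1 ∧ b = a + ((t:ℝ):S1) := by
  obtain ⟨s, t, hs, hst, ht1, hb, -⟩ := hx₀
  exact ⟨t, lt_trans hs hst, ht1, hb⟩

lemma mapsTo_compMap {A B : Set S1} (hAB : Disjoint A B) :
    Set.MapsTo (compMap A)
      {U | IsComplInterval (A ∪ B) U ∧ ∃ a ∈ A, ∃ b ∈ B, U = posArc a b}
      {U | IsComplInterval A U ∧ (U ∩ B).Nonempty} := by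
  rintro U ⟨⟨x₀, hx₀, hUc⟩, a, haA, b, hbB, hUab⟩
  have hx₀U : x₀ ∈ U := hUc ▸ mem_connectedComponentIn hx₀
  have hUconn : IsPreconnected U := hUc ▸ isPreconnected_connectedComponentIn
  have hUsub : U ⊆ (A ∪ B)ᶜ := hUc ▸ connectedComponentIn_subset _ _
  have hUA : U ⊆ Aᶜ := fun x hx => fun hxA => hUsub hx (Or.inl hxA)
  have hx₀A : x₀ ∈ Aᶜ := hUA hx₀U
  have hceq : compMap A U = connectedComponentIn Aᶜ x₀ := compMap_eq hUconn hx₀U hUA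
  obtain ⟨t, ht0, ht1, hb⟩ := posArc_struct (hUab ▸ hx₀U)
  have hbA : b ∈ Aᶜ := fun hbA => hAB.ne_of_mem hbA hbB rfl
  have hsub2 : posArc a b ∪ {b} ⊆ Aᶜ := by
    rintro x (hx | hx)
    · exact hUA (hUab ▸ hx)
    · rwa [Set.mem_singleton_iff.mp hx]
  have hbW : b ∈ connectedComponentIn Aᶜ x₀ := by
    apply (posArc_union_endpoint_preconnected hb ht0 ht1).subset_connectedComponentIn
      (Or.inl (hUab ▸ hx₀U)) hsub2
    exact Or.inr rfl
  exact ⟨⟨x₀, hx₀A, hceq⟩, ⟨b, hceq ▸ hbW, hbB⟩⟩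

lemma injOn_compMap {A B : Set S1} (hA : IsClosed A) (hAB : Disjoint A B) :
    Set.InjOn (compMap A)
      {U | IsComplInterval (A ∪ B) U ∧ ∃ a ∈ A, ∃ b ∈ B, U = posArc a b} := by
  rintro U₁ ⟨⟨x₁, hx₁, hU₁c⟩, a₁, ha₁, b₁, hb₁, hU₁ab⟩
    U₂ ⟨⟨x₂, hx₂, hU₂c⟩, a₂, ha₂, b₂, hb₂, hU₂ab⟩ heq
  have hx₁U : x₁ ∈ U₁ := hU₁c ▸ mem_connectedComponentIn hx₁
  have hx₂U : x₂ ∈ U₂ := hU₂c ▸ mem_connectedComponentIn hx₂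
  have hU₁conn : IsPreconnected U₁ := hU₁c ▸ isPreconnected_connectedComponentIn
  have hU₂conn : IsPreconnected U₂ := hU₂c ▸ isPreconnected_connectedComponentIn
  have hU₁A : U₁ ⊆ Aᶜ := fun x hx => fun hxA => (hU₁c ▸ connectedComponentIn_subset _ _) hx (Or.inl hxA)
  have hU₂A : U₂ ⊆ Aᶜ := fun x hx => fun hxA => (hU₂c ▸ connectedComponentIn_subset _ _) hx (Or.inl hxA)
  obtain ⟨t₁, ht₁0, ht₁1, hb₁e⟩ := posArc_struct (hU₁ab ▸ hx₁U)
  obtain ⟨t₂, ht₂0, ht₂1, hb₂e⟩ := posArc_struct (hU₂ab ▸ hx₂U)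
  have hU₁co : U₁ = {x | 0 < cLift a₁ x ∧ cLift a₁ x < t₁} := hU₁ab.trans (posArc_eq_coord hb₁e ht₁0 ht₁1)
  have hU₂co : U₂ = {x | 0 < cLift a₂ x ∧ cLift a₂ x < t₂} := hU₂ab.trans (posArc_eq_coord hb₂e ht₂0 ht₂1)
  -- the common component W of Aᶜ
  set W := connectedComponentIn Aᶜ x₁ with hW
  have hcm₁ : compMap A U₁ = W := compMap_eq hU₁conn hx₁U hU₁A
  have hcm₂ : compMap A U₂ = connectedComponentIn Aᶜ x₂ := compMap_eq hU₂conn hx₂U hU₂A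
  have hW₂ : connectedComponentIn Aᶜ x₂ = W := by rw [← hcm₂, ← heq, hcm₁]
  have hU₁W : U₁ ⊆ W := hU₁conn.subset_connectedComponentIn hx₁U hU₁A
  have hU₂W : U₂ ⊆ W := hW₂ ▸ hU₂conn.subset_connectedComponentIn hx₂U hU₂A
  have hWconn : IsPreconnected W := isPreconnected_connectedComponentIn
  have hWA : W ⊆ Aᶜ := connectedComponentIn_subset _ _
  -- first, a₂ = a₁
  have haeq : a₂ = a₁ := by
    by_contra hne
    set V := cLift a₁ '' W with hV
    have hWa₁ : W ⊆ ({a₁} : Set S1)ᶜ := fun x hx hxa => (hWA hx) (by rwa [Set.mem_singleton_iff.mp hxa])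
    have hVoc : V.OrdConnected := ordConnected_image_cLift hWa₁ hWconn
    set p := cLift a₁ a₂ with hp
    have hpIco : p ∈ Set.Ico (0:ℝ) 1 := cLift_mem_Ico a₁ a₂
    have hp0 : 0 < p := by
      rcases lt_or_eq_of_le hpIco.1 with h | h
      · exact h
      · exfalso; apply hne
        have h2 := coe_cLift a₁ a₂
        rw [show cLift a₁ a₂ = (0:ℝ) from by rw [← hp, ← h]] at h2
        simp at h2; exact h2.symm
    have hpV : p ∉ V := fun hpV => (hWA (by rwa [cLift_mem_image_iff] at hpV : a₂ ∈ W)) ha₂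
    set σ := min t₂ (1 - p) / 2 with hσ
    have hσ0 : 0 < σ := by
      apply div_pos _ two_pos
      exact lt_min ht₂0 (by linarith [hpIco.2])
    have hσt₂ : σ < t₂ := by
      have := min_le_left t₂ (1 - p); nlinarith
    have hσp : p + σ < 1 := by
      have := min_le_right t₂ (1 - p); nlinarith
    have hyU₂ : a₂ + ((σ:ℝ):S1) ∈ U₂ := by
      rw [hU₂co]
      rw [Set.mem_setOf_eq, cLift_coe a₂ ⟨hσ0.le, by linarith⟩]
      exact ⟨hσ0, hσt₂⟩
    have hyμ : cLift a₁ (a₂ + ((σ:ℝ):S1)) = p + σ := by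
      have : a₂ + ((σ:ℝ):S1) = a₁ + (((p + σ):ℝ):S1) := by
        rw [AddCircle.coe_add, ← add_assoc, coe_cLift a₁ a₂]
      rw [this]
      exact cLift_coe a₁ ⟨by linarith, hσp⟩
    have hpσV : p + σ ∈ V := by
      rw [← hyμ]; exact ⟨_, hU₂W hyU₂, rfl⟩
    set ε := min t₁ p / 2 with hε
    have hε0 : 0 < ε := div_pos (lt_min ht₁0 hp0) two_pos
    have hεt₁ : ε < t₁ := by have := min_le_left t₁ p; nlinarith
    have hεp : ε ≤ p := by have := min_le_right t₁ p; nlinarith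
    have hzU₁ : a₁ + ((ε:ℝ):S1) ∈ U₁ := by
      rw [hU₁co]
      rw [Set.mem_setOf_eq, cLift_coe a₁ ⟨hε0.le, by linarith [ht₁1]⟩]
      exact ⟨hε0, hεt₁⟩
    have hεV : ε ∈ V := by
      have : cLift a₁ (a₁ + ((ε:ℝ):S1)) = ε := cLift_coe a₁ ⟨hε0.le, by linarith⟩
      rw [← this]; exact ⟨_, hU₁W hzU₁, rfl⟩
    exact hpV (hVoc.out hεV hpσV ⟨hεp, by linarith⟩)
  subst haeq
  -- now find a common point
  set m := min t₁ t₂ / 2 with hm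
  have hm0 : 0 < m := div_pos (lt_min ht₁0 ht₂0) two_pos
  have hmt₁ : m < t₁ := by have := min_le_left t₁ t₂; nlinarith
  have hmt₂ : m < t₂ := by have := min_le_right t₁ t₂; nlinarith
  have hmlift : cLift a₂ (a₂ + ((m:ℝ):S1)) = m := cLift_coe a₂ ⟨hm0.le, by linarith⟩
  have hy₁ : a₂ + ((m:ℝ):S1) ∈ U₁ := by rw [hU₁co, Set.mem_setOf_eq, hmlift]; exact ⟨hm0, hmt₁⟩
  have hy₂ : a₂ + ((m:ℝ):S1) ∈ U₂ := by rw [hU₂co, Set.mem_setOf_eq, hmlift]; exact ⟨hm0, hmt₂⟩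
  rw [hU₁c, hU₂c, connectedComponentIn_eq (hU₁c ▸ hy₁ : _ ∈ connectedComponentIn (A ∪ B)ᶜ x₁),
    connectedComponentIn_eq (hU₂c ▸ hy₂ : _ ∈ connectedComponentIn (A ∪ B)ᶜ x₂)]

lemma surjOn_compMap {A B : Set S1} (hA : IsClosed A) (hB : IsClosed B)
    (hAne : A.Nonempty) (hAB : Disjoint A B) :
    Set.SurjOn (compMap A)
      {U | IsComplInterval (A ∪ B) U ∧ ∃ a ∈ A, ∃ b ∈ B, U = posArc a b}
      {U | IsComplInterval A U ∧ (U ∩ B).Nonempty} := by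
  rintro W ⟨⟨x₀, hx₀, rfl⟩, b₀, hb₀W, hb₀B⟩
  obtain ⟨a', ha'⟩ := hAne
  set W := connectedComponentIn Aᶜ x₀ with hWdef
  have hWA : W ⊆ Aᶜ := connectedComponentIn_subset _ _
  have hWconn : IsPreconnected W := isPreconnected_connectedComponentIn
  have hWopen : IsOpen W := hA.isOpen_compl.connectedComponentIn
  have ha'W : a' ∉ W := fun h => hWA h ha'
  have hWa' : W ⊆ ({a'} : Set S1)ᶜ := fun x hx hxa => (hWA hx) (by rwa [Set.mem_singleton_iff.mp hxa])
  have hx₀W : x₀ ∈ W := mem_connectedComponentIn hx₀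
  set V := cLift a' '' W with hVdef
  have hVne : V.Nonempty := ⟨_, x₀, hx₀W, rfl⟩
  have hVsub : V ⊆ Set.Ioo (0:ℝ) 1 := by rw [hVdef, image_cLift ha'W]; exact Set.inter_subset_left
  have hVopen : IsOpen V := isOpen_image_cLift ha'W hWopen
  have hVoc : V.OrdConnected := ordConnected_image_cLift hWa' hWconn
  have hVbdb : BddBelow V := ⟨0, fun v hv => (hVsub hv).1.le⟩
  have hVbda : BddAbove V := ⟨1, fun v hv => (hVsub hv).2.le⟩
  set α := sInf V with hα
  set β := sSup V with hβ
  have hVIoo : V = Set.Ioo α β := real_ioo_lemma hVne hVopen hVoc hVbdb hVbda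
  have hα0 : 0 ≤ α := le_csInf hVne fun v hv => (hVsub hv).1.le
  have hβ1 : β ≤ 1 := csSup_le hVne fun v hv => (hVsub hv).2.le
  have hαβ : α < β := by
    obtain ⟨v, hv⟩ := hVne
    have := hVIoo ▸ hv
    exact lt_trans this.1 this.2
  have hα1 : α < 1 := lt_of_lt_of_le hαβ hβ1
  -- the left endpoint is in A
  have hmemW : ∀ r : ℝ, r ∈ V → a' + ((r:ℝ):S1) ∈ W := by
    intro r hr
    exact mem_of_cLift_mem_image ⟨(hVsub hr).1.le, (hVsub hr).2⟩ hr
  have haA : a' + ((α:ℝ):S1) ∈ A := by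
    rcases eq_or_lt_of_le hα0 with h | hα0'
    · rw [← h]; simpa using ha'
    · by_contra haA
      -- a := a' + α is in Aᶜ; find δ
      have hcont : ContinuousAt (fun r : ℝ => a' + ((r:ℝ):S1)) α := (continuous_basept a').continuousAt
      have hnbhd : (fun r : ℝ => a' + ((r:ℝ):S1)) ⁻¹' Aᶜ ∈ nhds α :=
        hcont (hA.isOpen_compl.mem_nhds haA)
      obtain ⟨δ₁, hδ₁, hball⟩ := Metric.mem_nhds_iff.mp hnbhd
      set δ := min δ₁ (min α (min (1 - α) (β - α))) / 2 with hδdef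
      have hδ0 : 0 < δ := by
        apply div_pos _ two_pos
        exact lt_min hδ₁ (lt_min hα0' (lt_min (by linarith) (by linarith)))
      have hδδ₁ : δ < δ₁ := by
        have h1 := min_le_left δ₁ (min α (min (1 - α) (β - α))); nlinarith
      have hδα : δ < α := by
        have h1 : min δ₁ (min α (min (1 - α) (β - α))) ≤ α := le_trans (min_le_right _ _) (min_le_left _ _); nlinarith
      have hδ1α : δ < 1 - α := by
        have h1 : min δ₁ (min α (min (1 - α) (β - α))) ≤ 1 - α := le_trans (min_le_right _ _) (le_trans (min_le_right _ _) (min_le_left _ _)); nlinarith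
      have hδβα : δ < β - α := by
        have h1 : min δ₁ (min α (min (1 - α) (β - α))) ≤ β - α := le_trans (min_le_right _ _) (le_trans (min_le_right _ _) (min_le_right _ _)); nlinarith
      set J := (fun r : ℝ => a' + ((r:ℝ):S1)) '' Set.Ioo (α - δ) (α + δ) with hJ
      have hJA : J ⊆ Aᶜ := by
        rintro _ ⟨r, hr, rfl⟩
        apply hball
        rw [Metric.mem_ball, Real.dist_eq, abs_lt]
        constructor <;> [linarith [hr.1]; linarith [hr.2]]
      have hJconn : IsPreconnected J := isPreconnected_Ioo.image _ (continuous_basept a').continuousOn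
      have haJ : a' + ((α:ℝ):S1) ∈ J := ⟨α, ⟨by linarith, by linarith⟩, rfl⟩
      have hwV : α + δ/2 ∈ V := by rw [hVIoo]; constructor <;> linarith
      have hwW : a' + (((α + δ/2 :ℝ)):S1) ∈ W := hmemW _ hwV
      have hwJ : a' + (((α + δ/2 :ℝ)):S1) ∈ J := ⟨α + δ/2, ⟨by linarith, by linarith⟩, rfl⟩
      have hunion : IsPreconnected (J ∪ W) :=
        IsPreconnected.union _ hwJ hwW hJconn hWconn
      have hsub : J ∪ W ⊆ Aᶜ := Set.union_subset hJA hWA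
      have : J ∪ W ⊆ W := hunion.subset_connectedComponentIn (Or.inr hx₀W) hsub
      have haW : a' + ((α:ℝ):S1) ∈ W := this (Or.inl haJ)
      have : α ∈ V := by
        rw [← cLift_coe a' ⟨hα0, hα1⟩ (r := α)]
        exact ⟨_, haW, rfl⟩
      rw [hVIoo] at this
      exact lt_irrefl α this.1
  -- the first point of B in W
  set T := cLift a' '' (B ∩ W) with hT
  have hTne : T.Nonempty := ⟨_, b₀, ⟨hb₀B, hb₀W⟩, rfl⟩
  have hTV : T ⊆ V := Set.image_mono Set.inter_subset_right
  have hTbdb : BddBelow T := hVbdb.mono hTV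
  set τ := sInf T with hτ
  have hτcl : τ ∈ closure T := csInf_mem_closure hTne hTbdb
  have hτα : α ≤ τ := le_csInf hTne fun t ht => ((hVIoo ▸ hTV ht).1).le
  have hτβ : τ < β := by
    obtain ⟨t₀, ht₀⟩ := hTne
    exact lt_of_le_of_lt (csInf_le hTbdb ht₀) (hVIoo ▸ hTV ht₀).2
  have hτ1 : τ < 1 := lt_of_lt_of_le hτβ hβ1
  have hxB : a' + ((τ:ℝ):S1) ∈ B := by
    have hmaps : Set.MapsTo (fun r : ℝ => a' + ((r:ℝ):S1)) T B := by
      intro ρ hρ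
      have hρV := hTV hρ
      exact (mem_of_cLift_mem_image (W := B ∩ W) ⟨(hVsub hρV).1.le, (hVsub hρV).2⟩ hρ).1
    have := map_mem_closure (continuous_basept a') hτcl hmaps
    rwa [hB.closure_eq] at this
  have hτα' : α < τ := by
    rcases lt_or_eq_of_le hτα with h | h
    · exact h
    · exfalso
      exact hAB.ne_of_mem haA (h ▸ hxB) rfl
  have hτ0 : 0 < τ := lt_of_le_of_lt hα0 hτα'
  have hxW : a' + ((τ:ℝ):S1) ∈ W := hmemW τ (by rw [hVIoo]; exact ⟨hτα', hτβ⟩)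
  -- the candidate arc
  set U := posArc (a' + ((α:ℝ):S1)) (a' + ((τ:ℝ):S1)) with hU
  have hUco : U = {x | α < cLift a' x ∧ cLift a' x < τ} := posArc_coord a' hα0 hτα' hτ1
  have hUW : U ⊆ W := by
    intro x hx
    rw [hUco] at hx
    have : cLift a' x ∈ V := by rw [hVIoo]; exact ⟨hx.1, lt_trans hx.2 hτβ⟩
    rwa [cLift_mem_image_iff] at this
  have hUB : U ⊆ Bᶜ := by
    intro x hx hxB'
    rw [hUco] at hx
    have : cLift a' x ∈ T := ⟨x, ⟨hxB', hUW (hUco ▸ hx)⟩, rfl⟩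
    exact absurd (csInf_le hTbdb this) (not_le.mpr hx.2)
  have hUAB : U ⊆ (A ∪ B)ᶜ := by
    intro x hx
    rintro (h | h)
    · exact hWA (hUW hx) h
    · exact hUB hx h
  have hUconn : IsPreconnected U := hUco ▸ isPreconnected_coord_set a' hα0 hτ1.le
  set x₁ := a' + ((((α + τ)/2 : ℝ)):S1) with hx₁
  have hx₁lift : cLift a' x₁ = (α + τ)/2 := cLift_coe a' ⟨by linarith, by linarith⟩
  have hx₁U : x₁ ∈ U := by rw [hUco, Set.mem_setOf_eq, hx₁lift]; constructor <;> linarith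
  have hx₁W : x₁ ∈ W := hUW hx₁U
  have hWx₁ : W = connectedComponentIn Aᶜ x₁ := connectedComponentIn_eq hx₁W
  -- U is the component of (A ∪ B)ᶜ at x₁
  have hUcomp : U = connectedComponentIn (A ∪ B)ᶜ x₁ := by
    apply subset_antisymm
    · exact hUconn.subset_connectedComponentIn hx₁U hUAB
    · set K := connectedComponentIn (A ∪ B)ᶜ x₁ with hK
      have hKsub : K ⊆ (A ∪ B)ᶜ := connectedComponentIn_subset _ _
      have hKA : K ⊆ Aᶜ := fun x hx hxA => hKsub hx (Or.inl hxA)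
      have hKB : K ⊆ Bᶜ := fun x hx hxB' => hKsub hx (Or.inr hxB')
      have hx₁K : x₁ ∈ K := mem_connectedComponentIn (hUAB hx₁U)
      have hKconn : IsPreconnected K := isPreconnected_connectedComponentIn
      have hKW : K ⊆ W := by
        rw [hWx₁]
        exact hKconn.subset_connectedComponentIn hx₁K hKA
      have hKoc : (cLift a' '' K).OrdConnected :=
        ordConnected_image_cLift (fun x hx => hWa' (hKW hx)) hKconn
      intro x hxK
      rw [hUco, Set.mem_setOf_eq]
      have hxV : cLift a' x ∈ V := ⟨x, hKW hxK, rfl⟩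
      have hxαβ : cLift a' x ∈ Set.Ioo α β := hVIoo ▸ hxV
      refine ⟨hxαβ.1, ?_⟩
      by_contra hge
      push_neg at hge
      have hτK : τ ∈ cLift a' '' K := by
        have hm : (α + τ)/2 ∈ cLift a' '' K := ⟨x₁, hx₁K, hx₁lift⟩
        have hx' : cLift a' x ∈ cLift a' '' K := ⟨x, hxK, rfl⟩
        exact hKoc.out hm hx' ⟨by linarith, hge⟩
      obtain ⟨w, hwK, hwτ⟩ := hτK
      have : w = a' + ((τ:ℝ):S1) := by
        apply cLift_inj a'
        rw [hwτ, cLift_coe a' ⟨hτ0.le, hτ1⟩]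
      rw [this] at hwK
      exact hKB hwK hxB
  -- conclude
  refine ⟨U, ⟨⟨x₁, hUAB hx₁U, hUcomp⟩, a' + ((α:ℝ):S1), haA, a' + ((τ:ℝ):S1), hxB, rfl⟩, ?_⟩
  rw [compMap_eq hUconn hx₁U (fun x hx => hWA (hUW hx)), ← hWx₁]

lemma S1_eq_image (A B : Set S1) (hAB : Disjoint A B) :
    {U | IsComplInterval A U ∧ (U ∩ B).Nonempty}
      = (fun y => connectedComponentIn Aᶜ y) '' B := by
  ext U
  constructor
  · rintro ⟨⟨x, hx, rfl⟩, ⟨y, hyU, hyB⟩⟩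
    exact ⟨y, hyB, (connectedComponentIn_eq hyU).symm⟩
  · rintro ⟨y, hyB, rfl⟩
    have hyA : y ∈ Aᶜ := fun hyA => hAB.ne_of_mem hyA hyB rfl
    exact ⟨⟨y, hyA, rfl⟩, ⟨y, mem_connectedComponentIn hyA, hyB⟩⟩

lemma S1_props (A B : Set S1) (hA : IsClosed A) (hB : IsClosed B) (hBne : B.Nonempty)
    (hAB : Disjoint A B) :
    {U | IsComplInterval A U ∧ (U ∩ B).Nonempty}.Finite ∧
      {U | IsComplInterval A U ∧ (U ∩ B).Nonempty}.Nonempty := by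
  rw [S1_eq_image A B hAB]
  constructor
  · have hBsub : B ⊆ Aᶜ := fun y hy => fun hyA => hAB.ne_of_mem hyA hy rfl
    have hcover : B ⊆ ⋃ y : B, connectedComponentIn Aᶜ (y : S1) := by
      intro y hy
      exact Set.mem_iUnion.mpr ⟨⟨y, hy⟩, mem_connectedComponentIn (hBsub hy)⟩
    obtain ⟨s, hs⟩ := hB.isCompact.elim_finite_subcover
      (fun y : B => connectedComponentIn Aᶜ (y : S1))
      (fun y => hA.isOpen_compl.connectedComponentIn) hcover
    apply Set.Finite.subset
      (Set.Finite.image (fun y : B => connectedComponentIn Aᶜ (y:S1)) s.finite_toSet)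
    rintro _ ⟨y, hyB, rfl⟩
    obtain ⟨i, his, hyi⟩ := Set.mem_iUnion₂.mp (hs hyB)
    exact ⟨i, his, connectedComponentIn_eq hyi⟩
  · exact hBne.image _

/-- The main counting lemma: sets (i) and (iii) have the same, finite, nonzero count. -/
lemma mainLemma (A B : Set S1) (hA : IsClosed A) (hB : IsClosed B)
    (hAne : A.Nonempty) (hBne : B.Nonempty) (hAB : Disjoint A B) :
    {U | IsComplInterval A U ∧ (U ∩ B).Nonempty}.Finite ∧
    {U | IsComplInterval A U ∧ (U ∩ B).Nonempty}.Nonempty ∧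
    {U | IsComplInterval (A ∪ B) U ∧ ∃ a ∈ A, ∃ b ∈ B, U = posArc a b}.Finite ∧
    {U | IsComplInterval (A ∪ B) U ∧ ∃ a ∈ A, ∃ b ∈ B, U = posArc a b}.ncard
      = {U | IsComplInterval A U ∧ (U ∩ B).Nonempty}.ncard := by
  obtain ⟨hfin, hne⟩ := S1_props A B hA hB hBne hAB
  have hbij : Set.BijOn (compMap A)
      {U | IsComplInterval (A ∪ B) U ∧ ∃ a ∈ A, ∃ b ∈ B, U = posArc a b}
      {U | IsComplInterval A U ∧ (U ∩ B).Nonempty} :=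
    ⟨mapsTo_compMap hAB, injOn_compMap hA hAB, surjOn_compMap hA hB hAne hAB⟩
  have himg := hbij.image_eq
  have hfin3 : {U | IsComplInterval (A ∪ B) U ∧ ∃ a ∈ A, ∃ b ∈ B, U = posArc a b}.Finite :=
    Set.Finite.of_finite_image (himg ▸ hfin) hbij.injOn
  refine ⟨hfin, hne, hfin3, ?_⟩
  rw [← himg, Set.ncard_image_of_injOn hbij.injOn]

def Phi (U : Set S1) : Set S1 := (fun x : S1 => -x) ⁻¹' U

lemma Phi_Phi (U : Set S1) : Phi (Phi U) = U := by
  simp [Phi, Set.preimage_preimage]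

lemma Phi_inj : Function.Injective Phi := by
  intro U V h
  rw [← Phi_Phi U, h, Phi_Phi]

lemma Phi_compl (U : Set S1) : Phi Uᶜ = (Phi U)ᶜ := rfl

lemma Phi_union (U V : Set S1) : Phi (U ∪ V) = Phi U ∪ Phi V := rfl

lemma Phi_closed {U : Set S1} (h : IsClosed U) : IsClosed (Phi U) :=
  h.preimage continuous_neg

lemma Phi_nonempty {U : Set S1} (h : U.Nonempty) : (Phi U).Nonempty := by
  obtain ⟨x, hx⟩ := h
  exact ⟨-x, by simpa [Phi] using hx⟩

lemma Phi_disjoint {U V : Set S1} (h : Disjoint U V) : Disjoint (Phi U) (Phi V) :=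
  h.preimage _

lemma Phi_mem (U : Set S1) (x : S1) : x ∈ Phi U ↔ -x ∈ U := Iff.rfl

lemma neg_mem_posArc {a b x : S1} (h : x ∈ posArc a b) : -x ∈ posArc (-b) (-a) := by
  obtain ⟨s, t, hs, hst, ht1, hb, hx⟩ := h
  refine ⟨t - s, t, by linarith, by linarith, ht1, ?_, ?_⟩
  · rw [hb]; abel
  · rw [hx, hb, AddCircle.coe_sub]; abel

lemma Phi_posArc (a b : S1) : Phi (posArc a b) = posArc (-b) (-a) := by
  ext x
  rw [Phi_mem]
  constructor
  · intro h
    have := neg_mem_posArc h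
    simpa using this
  · intro h
    have := neg_mem_posArc h
    simpa using this

lemma Phi_connectedComponentIn (F : Set S1) (x : S1) :
    Phi (connectedComponentIn F x) = connectedComponentIn (Phi F) (-x) := by
  by_cases hx : x ∈ F
  · have h := (Homeomorph.neg S1).image_connectedComponentIn (s := F) hx
    have himg : ∀ s : Set S1, (Homeomorph.neg S1) '' s = Phi s := by
      intro s
      rw [Set.image_eq_preimage_of_inverse (g := fun x : S1 => -x) (fun y => by simp) (fun y => by simp)]
      rfl
    rw [← himg, h, himg]
    rfl
  · rw [connectedComponentIn_eq_empty hx, connectedComponentIn_eq_empty (by simpa [Phi_mem] using hx)]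
    rfl

lemma Phi_IsComplInterval {C U : Set S1} (h : IsComplInterval C U) :
    IsComplInterval (Phi C) (Phi U) := by
  obtain ⟨x, hx, rfl⟩ := h
  exact ⟨-x, by simpa [Phi_mem] using hx, by rw [← Phi_compl, Phi_connectedComponentIn]⟩

lemma Phi_S1set (A B : Set S1) :
    Phi '' {U | IsComplInterval A U ∧ (U ∩ B).Nonempty}
      = {U | IsComplInterval (Phi A) U ∧ (U ∩ Phi B).Nonempty} := by
  have fwd : ∀ A B : Set S1, ∀ U ∈ {U | IsComplInterval A U ∧ (U ∩ B).Nonempty},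
      Phi U ∈ {U | IsComplInterval (Phi A) U ∧ (U ∩ Phi B).Nonempty} := by
    rintro A B U ⟨h1, y, hyU, hyB⟩
    exact ⟨Phi_IsComplInterval h1, ⟨-y, by simpa [Phi_mem] using hyU, by simpa [Phi_mem] using hyB⟩⟩
  apply subset_antisymm
  · rintro _ ⟨U, hU, rfl⟩; exact fwd A B U hU
  · intro V hV
    refine ⟨Phi V, ?_, Phi_Phi V⟩
    have := fwd (Phi A) (Phi B) V hV
    rwa [Phi_Phi, Phi_Phi] at this

lemma Phi_S3set (A B : Set S1) :
    Phi '' {U | IsComplInterval (A ∪ B) U ∧ ∃ a ∈ A, ∃ b ∈ B, U = posArc a b}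
      = {U | IsComplInterval (Phi A ∪ Phi B) U ∧ ∃ a ∈ Phi A, ∃ b ∈ Phi B, U = posArc b a} := by
  have fwd : ∀ A B : Set S1, ∀ U ∈ {U | IsComplInterval (A ∪ B) U ∧ ∃ a ∈ A, ∃ b ∈ B, U = posArc a b},
      Phi U ∈ {U | IsComplInterval (Phi A ∪ Phi B) U ∧ ∃ a ∈ Phi A, ∃ b ∈ Phi B, U = posArc b a} := by
    rintro A B U ⟨h1, a, ha, b, hb, rfl⟩
    refine ⟨by rw [← Phi_union]; exact Phi_IsComplInterval h1, -a, by simpa [Phi_mem] using ha,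
      -b, by simpa [Phi_mem] using hb, Phi_posArc a b⟩
  have bwd : ∀ A B : Set S1, ∀ U ∈ {U | IsComplInterval (A ∪ B) U ∧ ∃ a ∈ A, ∃ b ∈ B, U = posArc b a},
      Phi U ∈ {U | IsComplInterval (Phi A ∪ Phi B) U ∧ ∃ a ∈ Phi A, ∃ b ∈ Phi B, U = posArc a b} := by
    rintro A B U ⟨h1, a, ha, b, hb, rfl⟩
    refine ⟨by rw [← Phi_union]; exact Phi_IsComplInterval h1, -a, by simpa [Phi_mem] using ha,
      -b, by simpa [Phi_mem] using hb, Phi_posArc b a⟩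
  apply subset_antisymm
  · rintro _ ⟨U, hU, rfl⟩; exact fwd A B U hU
  · intro V hV
    refine ⟨Phi V, ?_, Phi_Phi V⟩
    have := bwd (Phi A) (Phi B) V hV
    rwa [Phi_Phi, Phi_Phi] at this

lemma swapS4 (X Y : Set S1) :
    {U | IsComplInterval (X ∪ Y) U ∧ ∃ a ∈ X, ∃ b ∈ Y, U = posArc b a}
      = {U | IsComplInterval (Y ∪ X) U ∧ ∃ b ∈ Y, ∃ a ∈ X, U = posArc b a} := by
  ext U
  constructor
  · rintro ⟨h1, a, ha, b, hb, h2⟩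
    exact ⟨by rwa [Set.union_comm], b, hb, a, ha, h2⟩
  · rintro ⟨h1, b, hb, a, ha, h2⟩
    exact ⟨by rwa [Set.union_comm], a, ha, b, hb, h2⟩

/-- For disjoint closed nonempty `A, B ⊆ S¹`, the four collections of intervals
(i) complementary intervals of `A` meeting `B`, (ii) complementary intervals of `B`
meeting `A`, (iii) complementary intervals of `A ∪ B` of the form `(a,b)` with
`a ∈ A`, `b ∈ B`, and (iv) those of the form `(b,a)`, are all finite of the same
cardinality `n ≥ 1`. -/
theorem four_interval_counts (A B : Set S1)
    (hA : IsClosed A) (hB : IsClosed B)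
    (hAne : A.Nonempty) (hBne : B.Nonempty) (hAB : Disjoint A B) :
    ∃ n : ℕ, 1 ≤ n ∧
      ({U | IsComplInterval A U ∧ (U ∩ B).Nonempty}.Finite ∧
        {U | IsComplInterval A U ∧ (U ∩ B).Nonempty}.ncard = n) ∧
      ({U | IsComplInterval B U ∧ (U ∩ A).Nonempty}.Finite ∧
        {U | IsComplInterval B U ∧ (U ∩ A).Nonempty}.ncard = n) ∧
      ({U | IsComplInterval (A ∪ B) U ∧ ∃ a ∈ A, ∃ b ∈ B, U = posArc a b}.Finite ∧
        {U | IsComplInterval (A ∪ B) U ∧ ∃ a ∈ A, ∃ b ∈ B, U = posArc a b}.ncard = n) ∧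
      ({U | IsComplInterval (A ∪ B) U ∧ ∃ a ∈ A, ∃ b ∈ B, U = posArc b a}.Finite ∧
        {U | IsComplInterval (A ∪ B) U ∧ ∃ a ∈ A, ∃ b ∈ B, U = posArc b a}.ncard = n) := by
  obtain ⟨fin1, ne1, fin3, card31⟩ := mainLemma A B hA hB hAne hBne hAB
  obtain ⟨fin2, ne2, fin4', card42⟩ := mainLemma B A hB hA hBne hAne hAB.symm
  obtain ⟨-, -, -, cardP⟩ := mainLemma (Phi A) (Phi B) (Phi_closed hA) (Phi_closed hB)
    (Phi_nonempty hAne) (Phi_nonempty hBne) (Phi_disjoint hAB)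
  -- set (iv) equals the swapped set (iii)
  have hS4eq : {U | IsComplInterval (A ∪ B) U ∧ ∃ a ∈ A, ∃ b ∈ B, U = posArc b a}
      = {U | IsComplInterval (B ∪ A) U ∧ ∃ b ∈ B, ∃ a ∈ A, U = posArc b a} := swapS4 A B
  -- the negation chain : card S₃(B,A) = card S₁(A,B)
  have hPS3 : Phi '' {U | IsComplInterval (B ∪ A) U ∧ ∃ b ∈ B, ∃ a ∈ A, U = posArc b a}
      = {U | IsComplInterval (Phi A ∪ Phi B) U ∧ ∃ a ∈ Phi A, ∃ b ∈ Phi B, U = posArc a b} := by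
    rw [Phi_S3set B A, swapS4 (Phi B) (Phi A)]
  have hcard1 : {U | IsComplInterval (B ∪ A) U ∧ ∃ b ∈ B, ∃ a ∈ A, U = posArc b a}.ncard
      = {U | IsComplInterval (Phi A ∪ Phi B) U ∧ ∃ a ∈ Phi A, ∃ b ∈ Phi B, U = posArc a b}.ncard := by
    rw [← hPS3, Set.ncard_image_of_injective _ Phi_inj]
  have hcard2 : {U | IsComplInterval (Phi A) U ∧ (U ∩ Phi B).Nonempty}.ncard
      = {U | IsComplInterval A U ∧ (U ∩ B).Nonempty}.ncard := by
    rw [← Phi_S1set A B, Set.ncard_image_of_injective _ Phi_inj]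
  -- n
  refine ⟨{U | IsComplInterval A U ∧ (U ∩ B).Nonempty}.ncard,
    (Set.ncard_pos fin1).mpr ne1, ⟨fin1, rfl⟩, ⟨fin2, ?_⟩, ⟨fin3, card31⟩, ?_⟩
  · rw [← card42, hcard1, cardP, hcard2]
  · refine ⟨hS4eq ▸ fin4', ?_⟩
    rw [hS4eq, card42, ← hcard2, ← cardP, ← hcard1, card42]


end
end

section
/- Let A be a closed, connected subset of a closed disc 𝔻 = D ⊔ S that intersects the boundary circle S. Then for each connected component U of 𝔻 \ A, the trace U ∩ S is either empty or equal to a single connected component of S \ (A ∩ S). -/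
open Metric

noncomputable section

def disc : Set E2 := closedBall 0 1
section Prelims

open Complex Set Metric

def Complex.abs : AbsoluteValue ℂ ℝ where
  toFun := fun z => ‖z‖
  map_mul' := norm_mul
  nonneg' := norm_nonneg
  eq_zero' := fun _ => norm_eq_zero
  add_le' := norm_add_le

@[simp] lemma Complex.abs_apply (z : ℂ) : Complex.abs z = ‖z‖ := rfl

lemma Complex.norm_eq_abs (z : ℂ) : ‖z‖ = Complex.abs z := rfl

lemma Complex.abs_mul_exp_arg_mul_I (z : ℂ) :
    (Complex.abs z : ℂ) * Complex.exp (z.arg * I) = z := Complex.norm_mul_exp_arg_mul_I z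

lemma Complex.abs_re_le_abs (z : ℂ) : |z.re| ≤ Complex.abs z := Complex.abs_re_le_norm z

lemma Complex.re_le_abs (z : ℂ) : z.re ≤ Complex.abs z := Complex.re_le_norm z

lemma Complex.abs_exp_ofReal_mul_I (x : ℝ) : Complex.abs (Complex.exp (x * I)) = 1 :=
  Complex.norm_exp_ofReal_mul_I x

lemma Complex.sq_abs (z : ℂ) : Complex.abs z ^ 2 = Complex.normSq z := Complex.sq_norm z

lemma Complex.abs_conj (z : ℂ) : Complex.abs (starRingEnd ℂ z) = Complex.abs z :=
  Complex.norm_conj z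

lemma Complex.abs_ofReal (r : ℝ) : Complex.abs (r : ℂ) = |r| := by simp

lemma Complex.continuous_abs : Continuous (fun z : ℂ => Complex.abs z) := continuous_norm

lemma phase_eq {z : ℂ} (hz : z ≠ 0) : Complex.exp (z.arg * I) = z / Complex.abs z := by
  rw [eq_div_iff (by simpa using hz), mul_comm]
  exact Complex.abs_mul_exp_arg_mul_I z

lemma ratio_slit {p q : ℂ} (hq : q ≠ 0) (h : Complex.abs (p - q) < Complex.abs q) :
    0 < (p / q).re := by
  have h1 : Complex.abs (p / q - 1) < 1 := by
    rw [div_sub_one hq, map_div₀, div_lt_one (by simpa using hq)]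
    exact h
  have h2 := Complex.abs_re_le_abs (p / q - 1)
  have h3 : (p / q - 1).re = (p / q).re - 1 := by simp
  rw [h3] at h2
  have := abs_le.mp (le_of_lt (lt_of_le_of_lt h2 h1))
  cases abs_lt.mp (lt_of_le_of_lt h2 h1) with
  | intro hl hr => linarith

lemma telescope (w : ℕ → ℂ) (n : ℕ) (hw : ∀ k ≤ n, w k ≠ 0) :
    Complex.exp ((∑ k ∈ Finset.range n, ((w (k+1)) / (w k)).arg : ℝ) * I)
      = (w n / Complex.abs (w n)) / (w 0 / Complex.abs (w 0)) := by
  induction n with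
  | zero =>
    have h0 : w 0 ≠ 0 := hw 0 le_rfl
    have : w 0 / (Complex.abs (w 0) : ℂ) ≠ 0 := div_ne_zero h0 (by simpa using h0)
    simp only [Complex.abs_apply] at this
    simp [div_self this]
  | succ n ih =>
    have hwn : w n ≠ 0 := hw n (Nat.le_succ _)
    have hwn1 : w (n+1) ≠ 0 := hw (n+1) le_rfl
    have hih := ih (fun k hk => hw k (hk.trans (Nat.le_succ _)))
    rw [Finset.sum_range_succ, Complex.ofReal_add, add_mul, Complex.exp_add, hih,
      phase_eq (div_ne_zero hwn1 hwn)]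
    have h0 : w 0 ≠ 0 := hw 0 (Nat.zero_le _)
    have a0 : (Complex.abs (w 0) : ℂ) ≠ 0 := by simpa using h0
    have an : (Complex.abs (w n) : ℂ) ≠ 0 := by simpa using hwn
    have an1 : (Complex.abs (w (n+1)) : ℂ) ≠ 0 := by simpa using hwn1
    rw [map_div₀]
    push_cast
    field_simp

/-- Continuous argument for `F s - G t` on the unit square. -/
lemma lift_exists (F G : ℝ → ℂ) (hF : Continuous F) (hG : Continuous G)
    (m : ℝ) (hm : 0 < m)
    (hsep : ∀ s ∈ Icc (0:ℝ) 1, ∀ t ∈ Icc (0:ℝ) 1, m ≤ dist (F s) (G t)) :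
    ∃ θ : ℝ → ℝ → ℝ,
      (∀ p : ℝ × ℝ, p.1 ∈ Icc (0:ℝ) 1 → p.2 ∈ Icc (0:ℝ) 1 →
        ContinuousAt (fun q : ℝ × ℝ => θ q.1 q.2) p) ∧
      (∀ s ∈ Icc (0:ℝ) 1, ∀ t ∈ Icc (0:ℝ) 1,
        F s - G t = (Complex.abs (F s - G t) : ℂ) * Complex.exp ((θ s t : ℝ) * I)) := by
  -- uniform continuity on the compact interval
  have hFu := isCompact_Icc.uniformContinuousOn_of_continuous
      (hF.continuousOn : ContinuousOn F (Icc (0:ℝ) 1))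
  have hGu := isCompact_Icc.uniformContinuousOn_of_continuous
      (hG.continuousOn : ContinuousOn G (Icc (0:ℝ) 1))
  rw [Metric.uniformContinuousOn_iff] at hFu hGu
  obtain ⟨δF, hδF, hFm⟩ := hFu m hm
  obtain ⟨δG, hδG, hGm⟩ := hGu m hm
  set δ := min δF δG with hδdef
  have hδ : 0 < δ := lt_min hδF hδG
  obtain ⟨n₀, hn₀⟩ := exists_nat_one_div_lt hδ
  set N := n₀ + 1 with hNdef
  have hN : 0 < N := Nat.succ_pos _
  have hNr : (0:ℝ) < N := by exact_mod_cast hN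
  have hstep : (1:ℝ) / N < δ := by exact_mod_cast hn₀
  -- grid points
  set c : ℕ → ℝ → ℝ := fun k s => min s ((k : ℝ) / N) with hcdef
  have hc_mem : ∀ k : ℕ, ∀ s ∈ Icc (0:ℝ) 1, c k s ∈ Icc (0:ℝ) 1 := by
    intro k s hs
    exact ⟨le_min hs.1 (by positivity), le_trans (min_le_left _ _) hs.2⟩
  have hc_step : ∀ k : ℕ, ∀ s : ℝ, dist (c (k+1) s) (c k s) ≤ 1 / N := by
    intro k s
    have hab : ((k:ℝ))/N ≤ ((k:ℝ)+1)/N := by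
      gcongr
      linarith
    have hcast : c (k+1) s = min s (((k:ℝ)+1)/N) := by
      simp only [hcdef]; push_cast; ring_nf
    rw [hcast]
    have h1 : c k s ≤ min s (((k:ℝ)+1)/N) := min_le_min le_rfl hab
    rw [Real.dist_eq, _root_.abs_of_nonneg (by linarith)]
    rcases le_total s ((k:ℝ)/N) with hle | hle
    · have e1 : c k s = s := min_eq_left hle
      have e2 : min s (((k:ℝ)+1)/N) = s := min_eq_left (le_trans hle hab)
      rw [e1, e2]; simp only [sub_self]; positivity
    · have e1 : c k s = (k:ℝ)/N := min_eq_right hle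
      have e2 : min s (((k:ℝ)+1)/N) ≤ ((k:ℝ)+1)/N := min_le_right _ _
      rw [e1]
      have : ((k:ℝ)+1)/N - (k:ℝ)/N = 1/N := by ring
      linarith
  have h01 : (0:ℝ) ∈ Icc (0:ℝ) 1 := by norm_num
  have hne : ∀ s ∈ Icc (0:ℝ) 1, ∀ t ∈ Icc (0:ℝ) 1, F s - G t ≠ 0 := by
    intro s hs t ht h0
    have := hsep s hs t ht
    rw [Complex.dist_eq, h0] at this
    simp at this
    linarith
  have habs : ∀ s ∈ Icc (0:ℝ) 1, ∀ t ∈ Icc (0:ℝ) 1, m ≤ Complex.abs (F s - G t) := by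
    intro s hs t ht
    rw [Complex.abs_apply, ← Complex.dist_eq]
    exact hsep s hs t ht
  have hslitF : ∀ u ∈ Icc (0:ℝ) 1, ∀ v ∈ Icc (0:ℝ) 1, dist u v ≤ 1/N →
      0 < ((F u - G 0) / (F v - G 0)).re := by
    intro u hu v hv huv
    apply ratio_slit (hne v hv 0 h01)
    have h1 : Complex.abs ((F u - G 0) - (F v - G 0)) = dist (F u) (F v) := by
      rw [Complex.dist_eq, Complex.abs_apply]; congr 1; ring
    rw [h1]
    have h2 : dist (F u) (F v) < m :=
      hFm u hu v hv (lt_of_le_of_lt huv (lt_of_lt_of_le hstep (min_le_left _ _)))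
    exact lt_of_lt_of_le h2 (habs v hv 0 h01)
  have hslitG : ∀ s ∈ Icc (0:ℝ) 1, ∀ u ∈ Icc (0:ℝ) 1, ∀ v ∈ Icc (0:ℝ) 1, dist u v ≤ 1/N →
      0 < ((F s - G u) / (F s - G v)).re := by
    intro s hs u hu v hv huv
    apply ratio_slit (hne s hs v hv)
    have h1 : Complex.abs ((F s - G u) - (F s - G v)) = dist (G v) (G u) := by
      rw [Complex.dist_eq, Complex.abs_apply]; congr 1; ring
    rw [h1]
    have h2 : dist (G v) (G u) < m :=
      hGm v hv u hu (by rw [dist_comm]; exact lt_of_le_of_lt huv (lt_of_lt_of_le hstep (min_le_right _ _)))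
    exact lt_of_lt_of_le h2 (habs s hs v hv)
  refine ⟨fun s t =>
      (F 0 - G 0).arg
      + ∑ k ∈ Finset.range N, ((F (c (k+1) s) - G 0) / (F (c k s) - G 0)).arg
      + ∑ k ∈ Finset.range N, ((F s - G (c (k+1) t)) / (F s - G (c k t))).arg,
    ?_, ?_⟩
  · -- continuity
    rintro ⟨s, t⟩ hs ht
    simp only at hs ht ⊢
    apply ContinuousAt.add
    apply ContinuousAt.add continuousAt_const
    · -- first sum
      apply tendsto_finset_sum
      intro k _
      have hc1 : Continuous (fun q : ℝ × ℝ => F (c (k+1) q.1) - G 0) := by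
        apply Continuous.sub ?_ continuous_const
        exact hF.comp (continuous_fst.min continuous_const)
      have hc0 : Continuous (fun q : ℝ × ℝ => F (c k q.1) - G 0) := by
        apply Continuous.sub ?_ continuous_const
        exact hF.comp (continuous_fst.min continuous_const)
      have hden : F (c k s) - G 0 ≠ 0 := hne _ (hc_mem k s hs) 0 h01
      have hratio : ContinuousAt
          (fun q : ℝ × ℝ => (F (c (k+1) q.1) - G 0) / (F (c k q.1) - G 0)) (s, t) :=
        ContinuousAt.div hc1.continuousAt hc0.continuousAt hden
      have hmem : ((F (c (k+1) s) - G 0) / (F (c k s) - G 0)) ∈ Complex.slitPlane :=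
        Complex.mem_slitPlane_iff.mpr (Or.inl
          (hslitF _ (hc_mem (k+1) s hs) _ (hc_mem k s hs) (hc_step k s)))
      exact ContinuousAt.comp (g := Complex.arg) (Complex.continuousAt_arg hmem) hratio
    · -- second sum
      apply tendsto_finset_sum
      intro k _
      have hc1 : Continuous (fun q : ℝ × ℝ => F q.1 - G (c (k+1) q.2)) := by
        exact (hF.comp continuous_fst).sub (hG.comp (continuous_snd.min continuous_const))
      have hc0 : Continuous (fun q : ℝ × ℝ => F q.1 - G (c k q.2)) := by
        exact (hF.comp continuous_fst).sub (hG.comp (continuous_snd.min continuous_const))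
      have hden : F s - G (c k t) ≠ 0 := hne s hs _ (hc_mem k t ht)
      have hratio : ContinuousAt
          (fun q : ℝ × ℝ => (F q.1 - G (c (k+1) q.2)) / (F q.1 - G (c k q.2))) (s, t) :=
        ContinuousAt.div hc1.continuousAt hc0.continuousAt hden
      have hmem : ((F s - G (c (k+1) t)) / (F s - G (c k t))) ∈ Complex.slitPlane :=
        Complex.mem_slitPlane_iff.mpr (Or.inl
          (hslitG s hs _ (hc_mem (k+1) t ht) _ (hc_mem k t ht) (hc_step k t)))
      exact ContinuousAt.comp (g := Complex.arg) (Complex.continuousAt_arg hmem) hratio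
  · -- identity
    intro s hs t ht
    have hcN : ∀ u : ℝ, u ∈ Icc (0:ℝ) 1 → c N u = u := by
      intro u hu
      have : ((N:ℝ))/N = 1 := div_self (ne_of_gt hNr)
      simp only [hcdef, this]
      exact min_eq_left hu.2
    have hc0' : ∀ u : ℝ, u ∈ Icc (0:ℝ) 1 → c 0 u = 0 := by
      intro u hu
      simp only [hcdef]
      norm_num
      exact hu.1
    have hw1 : ∀ k ≤ N, F (c k s) - G 0 ≠ 0 := fun k _ => hne _ (hc_mem k s hs) 0 h01
    have hw2 : ∀ k ≤ N, F s - G (c k t) ≠ 0 := fun k _ => hne s hs _ (hc_mem k t ht)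
    have e1 := telescope (fun k => F (c k s) - G 0) N hw1
    have e2 := telescope (fun k => F s - G (c k t)) N hw2
    rw [hcN s hs, hc0' s hs] at e1
    rw [hcN t ht, hc0' t ht] at e2
    have e0 : Complex.exp ((F 0 - G 0).arg * I) =
        (F 0 - G 0) / (Complex.abs (F 0 - G 0) : ℂ) := phase_eq (hne 0 h01 0 h01)
    set A : ℝ := (F 0 - G 0).arg
    set S1 : ℝ := ∑ k ∈ Finset.range N, ((F (c (k+1) s) - G 0) / (F (c k s) - G 0)).arg
    set S2 : ℝ := ∑ k ∈ Finset.range N, ((F s - G (c (k+1) t)) / (F s - G (c k t))).arg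
    have hsplit : ((A + S1 + S2 : ℝ) : ℂ) * I = (A:ℂ)*I + (S1:ℂ)*I + (S2:ℂ)*I := by
      push_cast; ring
    have key : Complex.exp (((A + S1 + S2 : ℝ) : ℂ) * I)
        = (F s - G t) / (Complex.abs (F s - G t) : ℂ) := by
      rw [hsplit, Complex.exp_add, Complex.exp_add, e0, e1, e2]
      have n1 : F 0 - G 0 ≠ 0 := hne 0 h01 0 h01
      have n2 : F s - G 0 ≠ 0 := hne s hs 0 h01
      have n3 : F s - G t ≠ 0 := hne s hs t ht
      have a1 : (Complex.abs (F 0 - G 0) : ℂ) ≠ 0 := Complex.ofReal_ne_zero.mpr (Complex.abs.ne_zero n1)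
      have a2 : (Complex.abs (F s - G 0) : ℂ) ≠ 0 := Complex.ofReal_ne_zero.mpr (Complex.abs.ne_zero n2)
      have a3 : (Complex.abs (F s - G t) : ℂ) ≠ 0 := Complex.ofReal_ne_zero.mpr (Complex.abs.ne_zero n3)
      field_simp
    rw [key]
    have n3 : F s - G t ≠ 0 := hne s hs t ht
    have a3 : (Complex.abs (F s - G t) : ℂ) ≠ 0 := Complex.ofReal_ne_zero.mpr (Complex.abs.ne_zero n3)
    field_simp

lemma band {φ : ℝ → ℝ} (hφ : ContinuousOn φ (Icc 0 1))
    (h : ∀ u ∈ Icc (0:ℝ) 1, 0 < Real.cos (φ u)) :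
    ∃ m : ℤ, ∀ u ∈ Icc (0:ℝ) 1, φ u ∈ Ioo (2*Real.pi*m - Real.pi/2) (2*Real.pi*m + Real.pi/2) := by
  have pi_pos := Real.pi_pos
  have key : ∀ u ∈ Icc (0:ℝ) 1, ∃ m : ℤ,
      φ u ∈ Ioo (2*Real.pi*m - Real.pi/2) (2*Real.pi*m + Real.pi/2) := by
    intro u hu
    refine ⟨round (φ u / (2*Real.pi)), ?_⟩
    set m : ℤ := round (φ u / (2*Real.pi)) with hmdef
    obtain ⟨hl, hr⟩ := abs_le.mp (abs_sub_round (φ u / (2*Real.pi)))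
    have heq : φ u = (φ u / (2*Real.pi)) * (2*Real.pi) := by field_simp
    have h2l : -Real.pi ≤ φ u - 2*Real.pi*m := by nlinarith
    have h2r : φ u - 2*Real.pi*m ≤ Real.pi := by nlinarith
    have hcos : 0 < Real.cos (φ u - 2*Real.pi*m) := by
      have e : φ u - 2*Real.pi*m = φ u - m*(2*Real.pi) := by ring
      rw [e, Real.cos_sub_int_mul_two_pi]
      exact h u hu
    have h3 : |φ u - 2*Real.pi*m| < Real.pi/2 := by
      by_contra hc
      push_neg at hc
      have hnp : Real.cos (φ u - 2*Real.pi*m) ≤ 0 := by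
        rcases le_or_gt 0 (φ u - 2*Real.pi*m) with hs | hs
        · rw [_root_.abs_of_nonneg hs] at hc
          exact Real.cos_nonpos_of_pi_div_two_le_of_le hc (by linarith)
        · rw [_root_.abs_of_neg hs] at hc
          rw [← Real.cos_neg]
          exact Real.cos_nonpos_of_pi_div_two_le_of_le (by linarith) (by linarith)
      linarith
    obtain ⟨h3l, h3r⟩ := abs_lt.mp h3
    exact ⟨by linarith, by linarith⟩
  have step : ∀ u ∈ Icc (0:ℝ) 1, ∀ v ∈ Icc (0:ℝ) 1, ∀ mu mv : ℤ,
      φ u ∈ Ioo (2*Real.pi*mu - Real.pi/2) (2*Real.pi*mu + Real.pi/2) →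
      φ v ∈ Ioo (2*Real.pi*mv - Real.pi/2) (2*Real.pi*mv + Real.pi/2) →
      ¬ (mu < mv) := by
    intro u hu v hv mu mv hmu hmv hlt
    have hmuv : (mu : ℝ) + 1 ≤ mv := by exact_mod_cast hlt
    have h1 : φ u < 2*Real.pi*mv - Real.pi := by nlinarith [hmu.2]
    have h2 : 2*Real.pi*mv - Real.pi < φ v := by nlinarith [hmv.1]
    have hsub : uIcc u v ⊆ Icc (0:ℝ) 1 := uIcc_subset_Icc hu hv
    have hiv := intermediate_value_uIcc (hφ.mono hsub)
    have hmem : (2*Real.pi*mv - Real.pi) ∈ uIcc (φ u) (φ v) := by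
      rw [Set.mem_uIcc]; left; exact ⟨le_of_lt h1, le_of_lt h2⟩
    obtain ⟨w, hw, hweq⟩ := hiv hmem
    have hcw := h w (hsub hw)
    rw [hweq] at hcw
    have : Real.cos (2*Real.pi*mv - Real.pi) = -1 := by
      have e : 2*Real.pi*(mv:ℝ) - Real.pi = (mv:ℝ)*(2*Real.pi) - Real.pi := by ring
      rw [e]
      exact_mod_cast Real.cos_int_mul_two_pi_sub_pi mv
    linarith [this ▸ hcw]
  obtain ⟨m, hm⟩ := key 0 (by norm_num)
  refine ⟨m, fun u hu => ?_⟩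
  obtain ⟨m', hm'⟩ := key u hu
  rcases lt_trichotomy m' m with hlt | rfl | hgt
  · exact absurd hlt (step u hu 0 (by norm_num) m' m hm' hm)
  · exact hm'
  · exact absurd hgt (step 0 (by norm_num) u hu m m' hm hm')

lemma geo (μ : ℝ) (z : ℂ) (hz : Complex.abs z ≤ 1) (hne : z ≠ Complex.exp (μ * I)) :
    0 < ((Complex.exp (μ * I) - z) * Complex.exp (-μ * I)).re := by
  set a := Complex.exp (μ * I) with ha
  have haa : Complex.abs a = 1 := Complex.abs_exp_ofReal_mul_I μ
  have hconj : Complex.exp (-μ * I) = starRingEnd ℂ a := by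
    rw [ha, ← Complex.exp_conj]
    congr 1
    simp only [map_mul, Complex.conj_ofReal, Complex.conj_I]
    ring
  rw [hconj]
  have hnorm : (Complex.normSq a : ℂ) = 1 := by
    rw [← Complex.sq_abs, haa]; norm_num
  have hexp : (a - z) * starRingEnd ℂ a = 1 - z * starRingEnd ℂ a := by
    rw [sub_mul, Complex.mul_conj, hnorm]
  rw [hexp]
  set u := z * starRingEnd ℂ a with hu
  have hub : Complex.abs u ≤ 1 := by
    rw [hu, map_mul, Complex.abs_conj, haa, mul_one]; exact hz
  have hure : u.re ≤ 1 := le_trans (Complex.re_le_abs u) hub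
  rcases lt_or_eq_of_le hure with hlt | heq
  · simpa using hlt
  · exfalso
    have habs1 : Complex.abs u = 1 := le_antisymm hub (by rw [← heq]; exact Complex.re_le_abs u)
    have him : u.im = 0 := by
      have h2 : u.re^2 + u.im^2 = 1 := by
        have h3 := Complex.sq_abs u
        rw [habs1] at h3
        simpa [Complex.normSq_apply, pow_two] using h3.symm
      nlinarith
    have hu1 : u = 1 := by
      apply Complex.ext <;> simp [← heq, him]
    apply hne
    have hfin : z * (starRingEnd ℂ a * a) = a := by
      rw [← mul_assoc, ← hu, hu1, one_mul]
    rwa [mul_comm (starRingEnd ℂ a) a, Complex.mul_conj, hnorm, mul_one] at hfin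


lemma recos (w : ℂ) (θ μ : ℝ) (hθ : w = (Complex.abs w : ℂ) * Complex.exp ((θ:ℂ) * I)) :
    (w * Complex.exp ((-μ:ℂ) * I)).re = Complex.abs w * Real.cos (θ - μ) := by
  conv_lhs => rw [hθ]
  rw [mul_assoc, ← Complex.exp_add]
  have e : (θ:ℂ) * I + (-μ:ℂ) * I = ((θ - μ : ℝ) : ℂ) * I := by push_cast; ring
  rw [e]
  rw [show ((Complex.abs w : ℂ) * Complex.exp (((θ - μ : ℝ):ℂ) * I)).re
      = Complex.abs w * (Complex.exp (((θ - μ : ℝ):ℂ) * I)).re by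
    simp [Complex.re_ofReal_mul]]
  rw [Complex.exp_ofReal_mul_I_re]

lemma int_bounds {j : ℤ} {lo hi : ℝ} (h1 : lo < 2*Real.pi*j) (h2 : 2*Real.pi*j < hi)
    (hlo : ∃ p : ℤ, lo = 2*Real.pi*p) (hhi : ∃ q : ℤ, hi = 2*Real.pi*q) :
    ∃ p q : ℤ, lo = 2*Real.pi*p ∧ hi = 2*Real.pi*q ∧ p < j ∧ j < q := by
  have pi_pos := Real.pi_pos
  obtain ⟨p, rfl⟩ := hlo
  obtain ⟨q, rfl⟩ := hhi
  refine ⟨p, q, rfl, rfl, ?_, ?_⟩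
  · by_contra hc
    push_neg at hc
    have : (j:ℝ) ≤ p := by exact_mod_cast hc
    nlinarith
  · by_contra hc
    push_neg at hc
    have : (q:ℝ) ≤ j := by exact_mod_cast hc
    nlinarith

lemma corner_one {m n : ℤ} {x : ℝ} (h1 : x < 2*Real.pi*m - 2*Real.pi*n)
    (h2 : 2*Real.pi*m - 2*Real.pi*n < x + 2*Real.pi)
    (hx0 : 0 < x) (hx2 : x < 2*Real.pi) : m - n = 1 := by
  have pi_pos := Real.pi_pos
  have e : 2*Real.pi*m - 2*Real.pi*n = 2*Real.pi*((m - n : ℤ):ℝ) := by push_cast; ring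
  rw [e] at h1 h2
  have hlo : (0:ℝ) < 2*Real.pi*((m-n:ℤ):ℝ) := by linarith
  have hhi : 2*Real.pi*((m-n:ℤ):ℝ) < 2*Real.pi*((2:ℤ):ℝ) := by push_cast; linarith
  have hj0 : (0:ℤ) < m - n := by
    by_contra hc
    push_neg at hc
    have : ((m-n:ℤ):ℝ) ≤ 0 := by exact_mod_cast hc
    nlinarith
  have hj2 : m - n < 2 := by
    by_contra hc
    push_neg at hc
    have : ((2:ℤ):ℝ) ≤ ((m-n:ℤ):ℝ) := by exact_mod_cast hc
    nlinarith
  omega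

lemma corner_zero {m n : ℤ} {x : ℝ} (h1 : x < 2*Real.pi*m - 2*Real.pi*n)
    (h2 : 2*Real.pi*m - 2*Real.pi*n < x + 2*Real.pi)
    (hx0 : -(2*Real.pi) < x) (hx2 : x < 0) : m - n = 0 := by
  have pi_pos := Real.pi_pos
  have e : 2*Real.pi*m - 2*Real.pi*n = 2*Real.pi*((m - n : ℤ):ℝ) := by push_cast; ring
  rw [e] at h1 h2
  have hj0 : (-1:ℤ) < m - n := by
    by_contra hc
    push_neg at hc
    have : ((m-n:ℤ):ℝ) ≤ ((-1:ℤ):ℝ) := by exact_mod_cast hc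
    push_cast at this
    nlinarith
  have hj2 : m - n < 1 := by
    by_contra hc
    push_neg at hc
    have : ((1:ℤ):ℝ) ≤ ((m-n:ℤ):ℝ) := by exact_mod_cast hc
    push_cast at this
    nlinarith
  omega

/-- Crossing lemma: two disjoint paths in the closed unit disc cannot connect
interleaved boundary points. -/
lemma cross (F G : ℝ → ℂ) (hF : Continuous F) (hG : Continuous G)
    (hFd : ∀ s ∈ Icc (0:ℝ) 1, Complex.abs (F s) ≤ 1)
    (hGd : ∀ t ∈ Icc (0:ℝ) 1, Complex.abs (G t) ≤ 1)
    (α₁ β₁ α₂ β₂ : ℝ)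
    (h12 : α₁ < β₁) (h23 : β₁ < α₂) (h34 : α₂ < β₂) (h41 : β₂ < α₁ + 2*Real.pi)
    (hF0 : F 0 = Complex.exp ((α₁:ℂ) * I)) (hF1 : F 1 = Complex.exp ((α₂:ℂ) * I))
    (hG0 : G 0 = Complex.exp ((β₁:ℂ) * I)) (hG1 : G 1 = Complex.exp ((β₂:ℂ) * I))
    (hsep : ∀ s ∈ Icc (0:ℝ) 1, ∀ t ∈ Icc (0:ℝ) 1, F s ≠ G t) : False := by
  have pi_pos := Real.pi_pos
  have h01 : (0:ℝ) ∈ Icc (0:ℝ) 1 := by norm_num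
  have h11 : (1:ℝ) ∈ Icc (0:ℝ) 1 := by norm_num
  -- a positive separation
  obtain ⟨m, hm, hmsep⟩ : ∃ m : ℝ, 0 < m ∧
      ∀ s ∈ Icc (0:ℝ) 1, ∀ t ∈ Icc (0:ℝ) 1, m ≤ dist (F s) (G t) := by
    have hK1 : IsCompact ((fun p : ℝ × ℝ => dist (F p.1) (G p.2)) '' (Icc 0 1 ×ˢ Icc 0 1)) := by
      apply IsCompact.image (isCompact_Icc.prod isCompact_Icc)
      exact (hF.comp continuous_fst).dist (hG.comp continuous_snd)
    have hne : ((fun p : ℝ × ℝ => dist (F p.1) (G p.2)) '' (Icc 0 1 ×ˢ Icc 0 1)).Nonempty := by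
      exact ⟨_, Set.mem_image_of_mem _ (Set.mk_mem_prod h01 h01)⟩
    obtain ⟨m, hmmem, hmle⟩ := hK1.exists_isLeast hne
    obtain ⟨⟨s, t⟩, hst, rfl⟩ := hmmem
    refine ⟨dist (F s) (G t), ?_, ?_⟩
    · rw [dist_pos]
      exact hsep s hst.1 t hst.2
    · intro s' hs' t' ht'
      exact hmle ⟨(s', t'), Set.mk_mem_prod hs' ht', rfl⟩
  obtain ⟨θ, hθc, hθid⟩ := lift_exists F G hF hG m hm hmsep
  -- edge conditions
  have habs : ∀ s ∈ Icc (0:ℝ) 1, ∀ t ∈ Icc (0:ℝ) 1, 0 < Complex.abs (F s - G t) := by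
    intro s hs t ht
    rw [Complex.abs.pos_iff, sub_ne_zero]
    exact hsep s hs t ht
  -- generic conversion
  have hedge : ∀ s ∈ Icc (0:ℝ) 1, ∀ t ∈ Icc (0:ℝ) 1, ∀ μ : ℝ,
      0 < ((F s - G t) * Complex.exp ((-μ:ℂ) * I)).re →
      0 < Real.cos (θ s t - μ) := by
    intro s hs t ht μ h
    rw [recos (F s - G t) (θ s t) μ (hθid s hs t ht)] at h
    nlinarith [habs s hs t ht]
  have hedge' : ∀ s ∈ Icc (0:ℝ) 1, ∀ t ∈ Icc (0:ℝ) 1, ∀ μ : ℝ,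
      0 < ((G t - F s) * Complex.exp ((-μ:ℂ) * I)).re →
      Real.cos (θ s t - μ) < 0 := by
    intro s hs t ht μ h
    have e : (G t - F s) * Complex.exp ((-μ:ℂ) * I)
        = -((F s - G t) * Complex.exp ((-μ:ℂ) * I)) := by ring
    rw [e] at h
    simp only [Complex.neg_re] at h
    have h2 : ((F s - G t) * Complex.exp ((-μ:ℂ) * I)).re < 0 := by linarith
    rw [recos (F s - G t) (θ s t) μ (hθid s hs t ht)] at h2
    nlinarith [habs s hs t ht]
  -- the four edges
  have hleft : ∀ t ∈ Icc (0:ℝ) 1, 0 < Real.cos (θ 0 t - α₁) := by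
    intro t ht
    apply hedge 0 h01 t ht α₁
    rw [hF0]
    exact geo α₁ (G t) (hGd t ht) (by rw [← hF0]; exact (hsep 0 h01 t ht).symm)
  have hright : ∀ t ∈ Icc (0:ℝ) 1, 0 < Real.cos (θ 1 t - α₂) := by
    intro t ht
    apply hedge 1 h11 t ht α₂
    rw [hF1]
    exact geo α₂ (G t) (hGd t ht) (by rw [← hF1]; exact (hsep 1 h11 t ht).symm)
  have hbot : ∀ s ∈ Icc (0:ℝ) 1, Real.cos (θ s 0 - β₁) < 0 := by
    intro s hs
    apply hedge' s hs 0 h01 β₁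
    rw [hG0]
    exact geo β₁ (F s) (hFd s hs) (by rw [← hG0]; exact hsep s hs 0 h01)
  have htop : ∀ s ∈ Icc (0:ℝ) 1, Real.cos (θ s 1 - β₂) < 0 := by
    intro s hs
    apply hedge' s hs 1 h11 β₂
    rw [hG1]
    exact geo β₂ (F s) (hFd s hs) (by rw [← hG1]; exact hsep s hs 1 h11)
  -- continuity of restricted maps
  have hcL : ContinuousOn (fun t => θ 0 t - α₁) (Icc 0 1) := by
    intro t ht
    exact (((hθc (0, t) h01 ht).comp (by fun_prop : Continuous fun t : ℝ => ((0:ℝ), t)).continuousAt).sub continuousAt_const).continuousWithinAt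
  have hcR : ContinuousOn (fun t => θ 1 t - α₂) (Icc 0 1) := by
    intro t ht
    exact (((hθc (1, t) h11 ht).comp (by fun_prop : Continuous fun t : ℝ => ((1:ℝ), t)).continuousAt).sub continuousAt_const).continuousWithinAt
  have hcB : ContinuousOn (fun s => θ s 0 - β₁ - Real.pi) (Icc 0 1) := by
    intro s hs
    exact ((((hθc (s, 0) hs h01).comp (f := fun u : ℝ => (u, (0:ℝ))) (by fun_prop : Continuous fun u : ℝ => (u, (0:ℝ))).continuousAt).sub continuousAt_const).sub continuousAt_const).continuousWithinAt
  have hcT : ContinuousOn (fun s => θ s 1 - β₂ - Real.pi) (Icc 0 1) := by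
    intro s hs
    exact ((((hθc (s, 1) hs h11).comp (f := fun u : ℝ => (u, (1:ℝ))) (by fun_prop : Continuous fun u : ℝ => (u, (1:ℝ))).continuousAt).sub continuousAt_const).sub continuousAt_const).continuousWithinAt
  -- band on each edge
  obtain ⟨d, hd⟩ := band hcL (fun t ht => hleft t ht)
  obtain ⟨b, hb⟩ := band hcR (fun t ht => hright t ht)
  obtain ⟨a, ha⟩ := band hcB (fun s hs => by
    simp only [sub_sub]
    rw [show θ s 0 - (β₁ + Real.pi) = (θ s 0 - β₁) - Real.pi by ring, Real.cos_sub_pi]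
    linarith [hbot s hs])
  obtain ⟨cc, hc⟩ := band hcT (fun s hs => by
    simp only [sub_sub]
    rw [show θ s 1 - (β₂ + Real.pi) = (θ s 1 - β₂) - Real.pi by ring, Real.cos_sub_pi]
    linarith [htop s hs])
  -- corner chases
  have C00L := hd 0 h01
  have C00B := ha 0 h01
  have C10R := hb 0 h01
  have C10B := ha 1 h11
  have C11R := hb 1 h11
  have C11T := hc 1 h11
  have C01L := hd 1 h11
  have C01T := hc 0 h01
  simp only [Set.mem_Ioo] at C00L C00B C10R C10B C11R C11T C01L C01T
  -- corner (0,0) : d - a = 1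
  have e00 : d - a = 1 :=
    corner_one (x := β₁ - α₁) (by linarith [C00L.2, C00B.1]) (by linarith [C00L.1, C00B.2])
      (by linarith) (by linarith)
  have e10 : b - a = 0 :=
    corner_zero (x := β₁ - α₂) (by linarith [C10R.2, C10B.1]) (by linarith [C10R.1, C10B.2])
      (by linarith) (by linarith)
  have e11 : b - cc = 1 :=
    corner_one (x := β₂ - α₂) (by linarith [C11R.2, C11T.1]) (by linarith [C11R.1, C11T.2])
      (by linarith) (by linarith)
  have e01 : d - cc = 1 :=
    corner_one (x := β₂ - α₁) (by linarith [C01L.2, C01T.1]) (by linarith [C01L.1, C01T.2])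
      (by linarith) (by linarith)
  omega



def retr (z : ℂ) : ℂ := (max 1 (Complex.abs z))⁻¹ • z

lemma retr_M_pos (z : ℂ) : (0:ℝ) < max 1 (Complex.abs z) := lt_of_lt_of_le one_pos (le_max_left _ _)

lemma retr_cont : Continuous retr := by
  apply Continuous.fun_smul ?_ continuous_id
  exact (continuous_const.max Complex.continuous_abs).inv₀
    (fun z => ne_of_gt (retr_M_pos z))

lemma retr_id {z : ℂ} (hz : Complex.abs z ≤ 1) : retr z = z := by
  unfold retr
  rw [max_eq_left hz]
  simp

lemma retr_mem (z : ℂ) : Complex.abs (retr z) ≤ 1 := by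
  unfold retr
  rw [Complex.real_smul, map_mul, Complex.abs_ofReal,
    _root_.abs_of_pos (inv_pos.mpr (retr_M_pos z))]
  calc (max 1 (Complex.abs z))⁻¹ * Complex.abs z
      ≤ (max 1 (Complex.abs z))⁻¹ * (max 1 (Complex.abs z)) :=
        mul_le_mul_of_nonneg_left (le_max_right _ _) (inv_nonneg.mpr (le_of_lt (retr_M_pos z)))
    _ = 1 := inv_mul_cancel₀ (ne_of_gt (retr_M_pos z))

lemma retr_dist {z a : ℂ} (ha : Complex.abs a ≤ 1) :
    Complex.abs (retr z - a) ≤ Complex.abs (z - a) := by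
  rcases le_or_gt (Complex.abs z) 1 with h | h
  · rw [retr_id h]
  · unfold retr
    rw [max_eq_right (le_of_lt h)]
    set t := Complex.abs z with htdef
    have ht : 1 < t := h
    have ht0 : 0 < t := lt_trans one_pos ht
    set c : ℝ := t⁻¹ with hcdef
    have hct : c * t = 1 := inv_mul_cancel₀ (ne_of_gt ht0)
    have hc0 : 0 < c := inv_pos.mpr ht0
    have hc1 : c < 1 := by
      rw [hcdef, inv_lt_one_iff₀]; right; exact ht
    -- coordinates
    set zr := z.re; set zi := z.im; set ar := a.re; set ai := a.im
    have ht2 : zr^2 + zi^2 = t^2 := by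
      rw [htdef, Complex.sq_abs, Complex.normSq_apply]; ring
    have ha2 : ar^2 + ai^2 ≤ 1 := by
      have := Complex.sq_abs a
      rw [Complex.normSq_apply] at this
      nlinarith [ha, Complex.abs.nonneg a]
    have hS : zr*ar + zi*ai ≤ t := by
      have hcs : (zr*ar + zi*ai)^2 ≤ t^2 := by
        nlinarith [sq_nonneg (zr*ai - zi*ar)]
      nlinarith [sq_nonneg (zr*ar + zi*ai + t)]
    -- reduce to squares
    rw [← Real.sqrt_sq (Complex.abs.nonneg (c • z - a)), ← Real.sqrt_sq (Complex.abs.nonneg (z - a))]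
    apply Real.sqrt_le_sqrt
    rw [Complex.sq_abs, Complex.sq_abs, Complex.normSq_apply, Complex.normSq_apply]
    simp only [Complex.sub_re, Complex.sub_im, Complex.smul_re, Complex.smul_im, smul_eq_mul]
    have key : (c*zr - ar)^2 + (c*zi - ai)^2 - ((zr-ar)^2+(zi-ai)^2)
        = (c^2-1)*(zr^2+zi^2) + 2*(1-c)*(zr*ar+zi*ai) := by ring
    have hc2t : c^2*t^2 = 1 := by nlinarith [hct]
    have h1 : 2*(1-c)*(zr*ar+zi*ai) ≤ 2*(1-c)*t := by nlinarith [hS]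
    nlinarith [key, hc2t, h1, hct, sq_nonneg (t-1), ht2]

lemma retr_seg {p q : ℂ} (hq : q ∈ segment ℝ (retr p) p) : retr q = retr p := by
  rcases le_or_gt (Complex.abs p) 1 with h | h
  · rw [retr_id h, segment_same] at hq
    rw [hq, retr_id h]
  · have hmax : max 1 (Complex.abs p) = Complex.abs p := max_eq_right (le_of_lt h)
    set t := Complex.abs p with htdef
    have ht0 : 0 < t := lt_trans one_pos h
    set c : ℝ := t⁻¹ with hcdef
    have hct : c * t = 1 := inv_mul_cancel₀ (ne_of_gt ht0)
    have hc0 : 0 < c := inv_pos.mpr ht0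
    have hrp : retr p = c • p := by unfold retr; rw [hmax]
    obtain ⟨ta, tb, hta, htb, htab, hqq⟩ := hq
    rw [hrp] at hqq
    set e := ta * c + tb with hedef
    have hqe : q = e • p := by
      rw [← hqq, smul_smul, ← add_smul]
    have het : e * t = ta + tb * t := by
      have : e * t = ta * (c * t) + tb * t := by rw [hedef]; ring
      rw [this, hct, mul_one]
    have he1 : 1 ≤ e * t := by rw [het]; nlinarith
    have he0 : 0 < e := by
      rcases le_or_gt e 0 with he | he
      · exfalso; nlinarith
      · exact he
    have habsq : Complex.abs q = e * t := by
      rw [hqe, Complex.real_smul, map_mul, Complex.abs_ofReal,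
        _root_.abs_of_pos he0, ← htdef]
    have hmaxq : max 1 (Complex.abs q) = e * t := by
      rw [habsq]; exact max_eq_right he1
    unfold retr
    rw [hmaxq, hmax, hqe, smul_smul]
    congr 1
    rw [mul_inv]
    field_simp
lemma exp_circle_abs (α : ℝ) : Complex.abs (Complex.exp ((α:ℂ) * I)) = 1 :=
  Complex.abs_exp_ofReal_mul_I α

lemma exp_circle_mem (α : ℝ) : Complex.exp ((α:ℂ) * I) ∈ sphere (0:ℂ) 1 := by
  rw [mem_sphere_zero_iff_norm, Complex.norm_eq_abs]
  exact exp_circle_abs α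

lemma arc_meets {C : Set ℂ} {y₁ y₂ : ℂ} {β₁ β₂ : ℝ}
    (he1 : Complex.exp ((β₁:ℂ) * I) = y₁) (he2 : Complex.exp ((β₂:ℂ) * I) = y₂)
    (hb : β₁ ≤ β₂)
    (hy₁ : y₁ ∈ sphere (0:ℂ) 1 \ C) (hy₂ : y₂ ∈ sphere (0:ℂ) 1 \ C)
    (hcomp : y₂ ∉ connectedComponentIn (sphere (0:ℂ) 1 \ C) y₁) :
    ∃ α ∈ Ioo β₁ β₂, Complex.exp ((α:ℂ) * I) ∈ C := by
  by_contra hcon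
  push_neg at hcon
  set f : ℝ → ℂ := fun α => Complex.exp ((α:ℂ) * I) with hf
  have hfc : Continuous f := by
    apply Complex.continuous_exp.comp
    exact (Complex.continuous_ofReal).mul continuous_const
  set arc := f '' Icc β₁ β₂ with harc
  have harc_sub : arc ⊆ sphere (0:ℂ) 1 \ C := by
    rintro - ⟨α, hα, rfl⟩
    refine ⟨exp_circle_mem α, ?_⟩
    rcases eq_or_lt_of_le hα.1 with rfl | h1
    · rw [hf]; simp only; rw [he1]; exact hy₁.2
    rcases eq_or_lt_of_le hα.2 with rfl | h2
    · rw [hf]; simp only; rw [he2]; exact hy₂.2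
    · exact hcon α ⟨h1, h2⟩
  have harc_conn : IsPreconnected arc :=
    (isPreconnected_Icc).image f hfc.continuousOn
  have hy1arc : y₁ ∈ arc := ⟨β₁, ⟨le_rfl, hb⟩, he1⟩
  have hy2arc : y₂ ∈ arc := ⟨β₂, ⟨hb, le_rfl⟩, he2⟩
  exact hcomp (harc_conn.subset_connectedComponentIn hy1arc harc_sub hy2arc)

theorem mainC (A : Set ℂ) (hAd : A ⊆ closedBall 0 1) (hAcl : IsClosed A)
    (hAco : IsConnected A) :
    ∀ x ∈ closedBall (0:ℂ) 1 \ A,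
      connectedComponentIn (closedBall (0:ℂ) 1 \ A) x ∩ sphere 0 1 = ∅ ∨
        ∃ y ∈ sphere (0:ℂ) 1 \ (A ∩ sphere 0 1),
          connectedComponentIn (closedBall (0:ℂ) 1 \ A) x ∩ sphere 0 1 =
            connectedComponentIn (sphere (0:ℂ) 1 \ (A ∩ sphere 0 1)) y := by
  intro x hx
  set D := closedBall (0:ℂ) 1 with hD
  set S := sphere (0:ℂ) 1 with hS
  set U := connectedComponentIn (D \ A) x with hU
  have hUsub : U ⊆ D \ A := connectedComponentIn_subset _ _
  rcases Set.eq_empty_or_nonempty (U ∩ S) with he | ⟨y, hyU, hyS⟩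
  · exact Or.inl he
  right
  have hSD : S ⊆ D := sphere_subset_closedBall
  have hdiff : S \ (A ∩ S) = S \ A := Set.diff_inter_self_eq_diff
  have hyA : y ∉ A := (hUsub hyU).2
  refine ⟨y, ⟨hyS, fun h => hyA h.1⟩, ?_⟩
  rw [hdiff]
  set J := connectedComponentIn (S \ A) y with hJ
  -- easy inclusion : J ⊆ U ∩ S
  have hJUS : J ⊆ U ∩ S := by
    have hJs : J ⊆ S \ A := connectedComponentIn_subset _ _
    have hyJ : y ∈ J := mem_connectedComponentIn ⟨hyS, hyA⟩
    have hxy : U = connectedComponentIn (D \ A) y := connectedComponentIn_eq hyU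
    have hJU : J ⊆ U := by
      rw [hxy]
      exact isPreconnected_connectedComponentIn.subset_connectedComponentIn hyJ
        (fun z hz => ⟨hSD (hJs hz).1, (hJs hz).2⟩)
    exact fun z hz => ⟨hJU hz, (hJs hz).1⟩
  apply Set.Subset.antisymm ?_ hJUS
  -- hard inclusion
  rintro y' ⟨hy'U, hy'S⟩
  by_contra hy'J
  exfalso
  have hy'A : y' ∉ A := (hUsub hy'U).2
  have hyy' : y' ≠ y := fun h => hy'J (h ▸ mem_connectedComponentIn ⟨hyS, hyA⟩)
  have hyabs : Complex.abs y = 1 := by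
    rw [← Complex.norm_eq_abs, ← mem_sphere_zero_iff_norm]; exact hyS
  have hy'abs : Complex.abs y' = 1 := by
    rw [← Complex.norm_eq_abs, ← mem_sphere_zero_iff_norm]; exact hy'S
  have hyne : y ≠ 0 := by intro h; rw [h] at hyabs; simp at hyabs
  -- angles
  set β₁ := y.arg with hβ₁
  have he1 : Complex.exp ((β₁:ℂ) * I) = y := by
    have := Complex.abs_mul_exp_arg_mul_I y
    rwa [hyabs, Complex.ofReal_one, one_mul] at this
  set w := y' / y with hw
  have hwabs : Complex.abs w = 1 := by
    rw [hw, map_div₀, hyabs, hy'abs]; norm_num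
  have hwexp : Complex.exp ((w.arg :ℂ) * I) = w := by
    have := Complex.abs_mul_exp_arg_mul_I w
    rwa [hwabs, Complex.ofReal_one, one_mul] at this
  set d := w.arg with hd
  have hdpi : d ≤ Real.pi := Complex.arg_le_pi w
  have hdnegpi : -Real.pi < d := Complex.neg_pi_lt_arg w
  have hd0 : d ≠ 0 := by
    intro h
    rw [h] at hwexp
    simp at hwexp
    have : y' = y := by
      rw [hw] at hwexp
      exact (div_eq_one_iff_eq hyne).mp hwexp.symm
    exact hyy' this
  have pi_pos := Real.pi_pos
  set β₂ := if 0 < d then β₁ + d else β₁ + d + 2*Real.pi with hβ₂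
  have he2 : Complex.exp ((β₂:ℂ) * I) = y' := by
    have hbase : Complex.exp ((β₁:ℂ) * I) * Complex.exp ((d:ℂ) * I) = y' := by
      rw [he1, hwexp, hw]
      field_simp
    rw [hβ₂]
    split_ifs with hif
    · rw [show (((β₁ + d : ℝ)):ℂ) * I = (β₁:ℂ) * I + (d:ℂ) * I by push_cast; ring,
        Complex.exp_add, hbase]
    · rw [show (((β₁ + d + 2*Real.pi : ℝ)):ℂ) * I
          = ((β₁:ℂ) * I + (d:ℂ) * I) + (2*Real.pi:ℝ) * I by push_cast; ring,
        Complex.exp_add, Complex.exp_add]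
      rw [show ((2*Real.pi:ℝ):ℂ) * I = 2*Real.pi*I by push_cast; ring,
        Complex.exp_two_pi_mul_I, mul_one, hbase]
  have hb12 : β₁ < β₂ ∧ β₂ < β₁ + 2*Real.pi := by
    rw [hβ₂]
    split_ifs with hif
    · constructor <;> linarith
    · push_neg at hif
      have : d < 0 := lt_of_le_of_ne hif hd0
      constructor <;> linarith
  obtain ⟨hb1, hb2⟩ := hb12
  -- both arcs between y and y' meet A
  have hyD : y ∈ S \ A := ⟨hyS, hyA⟩
  have hy'D : y' ∈ S \ A := ⟨hy'S, hy'A⟩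
  have hcomp2 : y ∉ connectedComponentIn (S \ A) y' := by
    intro h
    have heq := connectedComponentIn_eq h
    apply hy'J
    rw [hJ, ← heq]
    exact mem_connectedComponentIn hy'D
  obtain ⟨α₂, hα₂mem, hα₂A⟩ := arc_meets he1 he2 (le_of_lt hb1) hyD hy'D (by rwa [← hJ])
  have he1' : Complex.exp (((β₁ + 2*Real.pi : ℝ):ℂ) * I) = y := by
    rw [show (((β₁ + 2*Real.pi : ℝ)):ℂ) * I = (β₁:ℂ) * I + 2*Real.pi*I by push_cast; ring,
      Complex.exp_add, Complex.exp_two_pi_mul_I, mul_one, he1]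
  obtain ⟨α₁', hα₁mem, hα₁A⟩ := arc_meets he2 he1' (by linarith) hy'D hyD hcomp2
  set α₁ := α₁' - 2*Real.pi with hα₁
  set c₁ := Complex.exp ((α₁':ℂ) * I) with hc₁
  set c₂ := Complex.exp ((α₂:ℂ) * I) with hc₂
  have hc₁exp : Complex.exp ((α₁:ℂ) * I) = c₁ := by
    rw [hα₁, show (((α₁' - 2*Real.pi : ℝ)):ℂ) * I = (α₁':ℂ) * I + (-(2*Real.pi*I)) by push_cast; ring,
      Complex.exp_add, Complex.exp_neg, Complex.exp_two_pi_mul_I, inv_one, mul_one]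
  have hI : α₁ < β₁ ∧ β₁ < α₂ ∧ α₂ < β₂ ∧ β₂ < α₁ + 2*Real.pi := by
    refine ⟨by linarith [hα₁mem.2], hα₂mem.1, hα₂mem.2, by linarith [hα₁mem.1]⟩
  -- U is relatively open in D
  have hUopen : ∀ z ∈ U, ∃ ε > 0, ball z ε ∩ D ⊆ U := by
    intro z hz
    have hzA : z ∉ A := (hUsub hz).2
    obtain ⟨ε, hε, hball⟩ := Metric.isOpen_iff.mp hAcl.isOpen_compl z hzA
    refine ⟨ε, hε, ?_⟩
    have hWsub : ball z ε ∩ D ⊆ D \ A := fun q hq => ⟨hq.2, hball hq.1⟩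
    have hWconv : Convex ℝ (ball z ε ∩ D) := (convex_ball z ε).inter (convex_closedBall 0 1)
    have hzW : z ∈ ball z ε ∩ D := ⟨mem_ball_self hε, (hUsub hz).1⟩
    have := hWconv.isPreconnected.subset_connectedComponentIn hzW hWsub
    rwa [← connectedComponentIn_eq hz] at this
  -- the preimage of U under the retraction
  set V := retr ⁻¹' U with hV
  have hUV : U ⊆ V := by
    intro u hu
    have : retr u = u := retr_id (by
      rw [← Complex.norm_eq_abs, ← mem_closedBall_zero_iff]; exact (hUsub hu).1)
    simp only [hV, Set.mem_preimage, this]; exact hu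
  have hVo : IsOpen V := by
    rw [isOpen_iff_mem_nhds]
    intro p hp
    obtain ⟨ε, hε, hball⟩ := hUopen (retr p) hp
    apply Filter.mem_of_superset
      (retr_cont.continuousAt.preimage_mem_nhds (ball_mem_nhds (retr p) hε))
    intro q hq
    have hqD : retr q ∈ D := by
      rw [hD, mem_closedBall_zero_iff, Complex.norm_eq_abs]; exact retr_mem q
    exact hball ⟨hq, hqD⟩
  have hVconn : IsPreconnected V := by
    apply isPreconnected_of_forall y
    intro p hp
    refine ⟨segment ℝ (retr p) p ∪ U, ?_, Or.inr hyU, Or.inl (right_mem_segment ℝ _ _), ?_⟩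
    · rintro q (hq | hq)
      · have : retr q = retr p := retr_seg hq
        simp only [hV, Set.mem_preimage, this]; exact hp
      · exact hUV hq
    · apply IsPreconnected.union (retr p)
      · exact left_mem_segment ℝ _ _
      · exact hp
      · exact (convex_segment _ _).isPreconnected
      · exact isPreconnected_connectedComponentIn
  -- a path from y to y' inside U
  have hVpc : IsPathConnected V :=
    (hVo.isConnected_iff_isPathConnected).mp ⟨⟨y, hUV hyU⟩, hVconn⟩
  have hjoin : JoinedIn V y y' := hVpc.joinedIn y (hUV hyU) y' (hUV hy'U)
  set γ : Path y y' := hjoin.somePath with hγdef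
  have hγmem : ∀ t, γ t ∈ V := hjoin.somePath_mem
  -- the path G
  set G : ℝ → ℂ := fun u => retr (γ.extend u) with hGdef
  have hGcont : Continuous G := retr_cont.comp γ.continuous_extend
  have hGU : ∀ t ∈ Icc (0:ℝ) 1, G t ∈ U := by
    intro t ht
    rw [hGdef]
    simp only
    rw [γ.extend_apply ht]
    exact hγmem ⟨t, ht⟩
  have hG0 : G 0 = y := by
    rw [hGdef]; simp only; rw [γ.extend_zero]
    exact retr_id (le_of_eq hyabs)
  have hG1 : G 1 = y' := by
    rw [hGdef]; simp only; rw [γ.extend_one]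
    exact retr_id (le_of_eq hy'abs)
  have hGd : ∀ t ∈ Icc (0:ℝ) 1, Complex.abs (G t) ≤ 1 := fun t _ => retr_mem _
  -- the compact image K and a thickening of A avoiding it
  set K := G '' Icc 0 1 with hK
  have hKcomp : IsCompact K := isCompact_Icc.image hGcont
  have hAK : A ⊆ Kᶜ := by
    intro a ha hKa
    obtain ⟨t, ht, hGt⟩ := hKa
    exact (hUsub (hGU t ht)).2 (hGt ▸ ha)
  have hAcomp : IsCompact A :=
    Metric.isCompact_of_isClosed_isBounded hAcl ((isBounded_closedBall).subset hAd)
  obtain ⟨ε, hε, hthick⟩ :=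
    hAcomp.exists_thickening_subset_open hKcomp.isClosed.isOpen_compl hAK
  set N := thickening ε A with hN
  have hAN : A ⊆ N := self_subset_thickening hε A
  have hNo : IsOpen N := isOpen_thickening
  have hc₁A : c₁ ∈ A := hα₁A
  have hc₂A : c₂ ∈ A := hα₂A
  have hNconn : IsPreconnected N := by
    apply isPreconnected_of_forall c₁
    intro p hp
    obtain ⟨a, haA, hpa⟩ := mem_thickening_iff.mp hp
    refine ⟨segment ℝ p a ∪ A, ?_, Or.inr hc₁A, Or.inl (left_mem_segment ℝ _ _), ?_⟩
    · rintro q (hq | hq)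
      · obtain ⟨ta, tb, hta, htb, htab, rfl⟩ := hq
        rw [hN, mem_thickening_iff]
        refine ⟨a, haA, ?_⟩
        have : ta • p + tb • a - a = ta • (p - a) := by
          rw [smul_sub]
          have : tb • a - a = (tb - 1) • a := by rw [sub_smul, one_smul]
          rw [show ta • p + tb • a - a = ta • p + (tb • a - a) by ring, this,
            show tb - 1 = -ta by linarith]
          simp [smul_sub]
          ring
        rw [dist_eq_norm, this, norm_smul]
        calc ‖ta‖ * ‖p - a‖ ≤ 1 * ‖p - a‖ := by
              apply mul_le_mul_of_nonneg_right _ (norm_nonneg _)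
              rw [Real.norm_eq_abs, _root_.abs_of_nonneg hta]; linarith
          _ = ‖p - a‖ := one_mul _
          _ = dist p a := (dist_eq_norm p a).symm
          _ < ε := hpa
      · exact hAN hq
    · exact IsPreconnected.union a (right_mem_segment ℝ _ _) haA
        (convex_segment _ _).isPreconnected hAco.isPreconnected
  have hNpc : IsPathConnected N :=
    (hNo.isConnected_iff_isPathConnected).mp ⟨⟨c₁, hAN hc₁A⟩, hNconn⟩
  have hjoin2 : JoinedIn N c₁ c₂ := hNpc.joinedIn c₁ (hAN hc₁A) c₂ (hAN hc₂A)
  set δpath : Path c₁ c₂ := hjoin2.somePath with hδdef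
  have hδmem : ∀ t, δpath t ∈ N := hjoin2.somePath_mem
  set F : ℝ → ℂ := fun u => retr (δpath.extend u) with hFdef
  have hFcont : Continuous F := retr_cont.comp δpath.continuous_extend
  have hFd : ∀ t ∈ Icc (0:ℝ) 1, Complex.abs (F t) ≤ 1 := fun t _ => retr_mem _
  have hc₁abs : Complex.abs c₁ ≤ 1 := le_of_eq (exp_circle_abs α₁')
  have hc₂abs : Complex.abs c₂ ≤ 1 := le_of_eq (exp_circle_abs α₂)
  have hF0 : F 0 = Complex.exp ((α₁:ℂ) * I) := by
    rw [hFdef]; simp only; rw [δpath.extend_zero, retr_id hc₁abs, hc₁exp]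
  have hF1 : F 1 = Complex.exp ((α₂:ℂ) * I) := by
    rw [hFdef]; simp only; rw [δpath.extend_one, retr_id hc₂abs]
  -- F stays in the thickening, G in K : they are disjoint
  have hsep : ∀ s ∈ Icc (0:ℝ) 1, ∀ t ∈ Icc (0:ℝ) 1, F s ≠ G t := by
    intro s hs t ht heq
    have hδs : δpath.extend s ∈ N := by
      rw [δpath.extend_apply hs]; exact hδmem _
    obtain ⟨a, haA, hda⟩ := mem_thickening_iff.mp hδs
    have haabs : Complex.abs a ≤ 1 := by
      have := hAd haA
      rwa [mem_closedBall_zero_iff, Complex.norm_eq_abs] at this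
    have hFs : F s ∈ N := by
      rw [hN, mem_thickening_iff]
      refine ⟨a, haA, ?_⟩
      calc dist (F s) a = Complex.abs (retr (δpath.extend s) - a) := by
            rw [hFdef, Complex.dist_eq]; rfl
        _ ≤ Complex.abs (δpath.extend s - a) := retr_dist haabs
        _ = dist (δpath.extend s) a := (Complex.dist_eq _ _).symm
        _ < ε := hda
    have : F s ∈ Kᶜ := hthick hFs
    exact this (heq ▸ ⟨t, ht, rfl⟩)
  -- contradiction via the crossing lemma
  exact cross F G hFcont hGcont hFd hGd α₁ β₁ α₂ β₂ hI.1 hI.2.1 hI.2.2.1 hI.2.2.2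
    hF0 hF1 (by rw [hG0, he1]) (by rw [hG1, he2]) hsep



end Prelims

open Complex Set Metric in
/-- Let `A` be a closed connected subset of the closed disc meeting the boundary
circle.  Then for each connected component `U` of `𝔻 \ A`, the trace `U ∩ S` is
either empty or a single connected component of `S \ (A ∩ S)`. -/
theorem complementary_region_trace (A : Set E2)
    (hAd : A ⊆ disc) (hAcl : IsClosed A) (hAco : IsConnected A)
    (hAS : (A ∩ circ).Nonempty) :
    ∀ x ∈ disc \ A,
      connectedComponentIn (disc \ A) x ∩ circ = ∅ ∨
        ∃ y ∈ circ \ (A ∩ circ),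
          connectedComponentIn (disc \ A) x ∩ circ =
            connectedComponentIn (circ \ (A ∩ circ)) y := by
  intro x hx
  set e : ℂ ≃ₗᵢ[ℝ] E2 := Complex.orthonormalBasisOneI.repr with hedef
  have hpre_disc : (⇑e) ⁻¹' disc = closedBall (0:ℂ) 1 := by
    ext z
    simp only [Set.mem_preimage, disc, mem_closedBall_zero_iff, e.norm_map]
  have hpre_circ : (⇑e) ⁻¹' circ = sphere (0:ℂ) 1 := by
    ext z
    simp only [Set.mem_preimage, circ, mem_sphere_zero_iff_norm, e.norm_map]
  set A' : Set ℂ := (⇑e) ⁻¹' A with hA'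
  set x' : ℂ := e.symm x with hx'def
  have hex : e x' = x := e.apply_symm_apply x
  have hx' : x' ∈ closedBall (0:ℂ) 1 \ A' := by
    rw [← hpre_disc]
    constructor
    · show e x' ∈ disc
      rw [hex]; exact hx.1
    · show ¬ e x' ∈ A
      rw [hex]; exact hx.2
  have hA'd : A' ⊆ closedBall (0:ℂ) 1 := by
    rw [← hpre_disc]
    exact Set.preimage_mono hAd
  have hA'cl : IsClosed A' := hAcl.preimage e.continuous
  have hA'img : A' = (⇑e.symm) '' A := by
    ext z
    constructor
    · intro hz; exact ⟨e z, hz, e.symm_apply_apply z⟩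
    · rintro ⟨w, hw, rfl⟩
      show e (e.symm w) ∈ A
      rw [e.apply_symm_apply]; exact hw
  have hA'co : IsConnected A' := by
    rw [hA'img]
    exact hAco.image _ e.symm.continuous.continuousOn
  have himg_diff_disc : (⇑e) '' (closedBall (0:ℂ) 1 \ A') = disc \ A := by
    rw [← hpre_disc, ← Set.preimage_diff, Set.image_preimage_eq _ e.surjective]
  have himg_circ : (⇑e) '' (sphere (0:ℂ) 1) = circ := by
    rw [← hpre_circ, Set.image_preimage_eq _ e.surjective]
  have hcompeq : (⇑e) '' connectedComponentIn (closedBall (0:ℂ) 1 \ A') x'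
      = connectedComponentIn (disc \ A) x := by
    have := (e.toHomeomorph.image_connectedComponentIn
      (s := closedBall (0:ℂ) 1 \ A') hx')
    have hco : ⇑e.toHomeomorph = ⇑e := rfl
    rw [hco] at this
    rw [this, himg_diff_disc, hex]
  have htr : ∀ (C : Set ℂ),
      (⇑e) '' C ∩ circ = (⇑e) '' (C ∩ sphere (0:ℂ) 1) := by
    intro C
    rw [Set.image_inter e.injective, himg_circ]
  rcases mainC A' hA'd hA'cl hA'co x' hx' with hleft | ⟨y', hy'mem, heq⟩
  · left
    rw [← hcompeq, htr, hleft, Set.image_empty]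
  · right
    refine ⟨e y', ?_, ?_⟩
    · constructor
      · rw [← himg_circ]; exact ⟨y', hy'mem.1, rfl⟩
      · intro hyc
        apply hy'mem.2
        refine ⟨?_, hy'mem.1⟩
        show y' ∈ A'
        rw [hA']
        exact hyc.1
    · rw [← hcompeq, htr, heq]
      have h2 := (e.toHomeomorph.image_connectedComponentIn
        (s := sphere (0:ℂ) 1 \ (A' ∩ sphere (0:ℂ) 1)) hy'mem)
      have hco : ⇑e.toHomeomorph = ⇑e := rfl
      rw [hco] at h2
      rw [h2]
      congr 1
      rw [Set.image_diff e.injective, himg_circ, Set.image_inter e.injective, himg_circ,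
        show (⇑e) '' A' = A from by rw [hA', Set.image_preimage_eq _ e.surjective]]

end
end
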